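/- arXiv:2102.12811 — 10 statements merged into one kernel-verified Lean document; each statement's English description precedes it below -/
import Mathlib

section
/- Let σ₁ > 0 and σ₂ > 0 and let Φ : X × Y → ℝ. Then the infimum over all pairs of functions U, V : X × Y → ℝ satisfying U(x,y) + V(x,y) ≥ Φ(x,y) for all (x,y) of the quantity σ₁ Σ_x p(x) log(Σ_y exp(U(x,y)/σ₁)) + σ₂ Σ_y q(y) log(Σ_x exp(V(x,y)/σ₂)) is equal to max_{π ∈ M(p,q)} [Σ_{x,y} π(x,y) Φ(x,y) − (σ₁+σ₂) I(π)] + σ₁ S(q) + σ₂ S(p), and the maximum on the right-hand side is attained. -/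
open Finset Real

/-- A coupling of the probability mass functions `p` and `q`. -/
def IsCoupling {X Y : Type*} [Fintype X] [Fintype Y]
    (p : X → ℝ) (q : Y → ℝ) (μ : X × Y → ℝ) : Prop :=
  (∀ z, 0 ≤ μ z) ∧ (∀ x, ∑ y, μ (x, y) = p x) ∧ (∀ y, ∑ x, μ (x, y) = q y)

/-- Mutual information of a coupling (with `0 log 0 = 0`, which holds since `Real.log 0 = 0`). -/
noncomputable def mutualInfo {X Y : Type*} [Fintype X] [Fintype Y]
    (p : X → ℝ) (q : Y → ℝ) (μ : X × Y → ℝ) : ℝ :=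
  ∑ x, ∑ y, μ (x, y) * Real.log (μ (x, y) / (p x * q y))

/-- Shannon entropy of a probability mass function. -/
noncomputable def entropy {Z : Type*} [Fintype Z] (p : Z → ℝ) : ℝ :=
  -∑ z, p z * Real.log (p z)

/-!
Weak duality is Gibbs' variational inequality `∑ r a - ∑ r log r ≤ log ∑ exp a` applied to every
row and every column of a coupling; it is an equality exactly when the row (column) is the
softmax of `a`. For strong duality it suffices to minimise the dual over pairs `(U, Φ - U)`. This
objective is invariant under adding a constant to `U` and it bounds the oscillation of `U`, so a
minimiser exists by compactness. Its first-order condition says that the row-softmax plan of `U`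
equals the column-softmax plan of `Φ - U`; this plan is therefore a coupling, and at it every Gibbs
inequality is an equality, which closes the duality gap.
-/

section LogSumExp

variable {ι : Type*} [Fintype ι]

noncomputable def logSumExp (a : ι → ℝ) : ℝ := log (∑ i, exp (a i))

noncomputable def softmax (a : ι → ℝ) (i : ι) : ℝ := exp (a i) / ∑ j, exp (a j)

theorem sum_exp_pos [Nonempty ι] (a : ι → ℝ) : 0 < ∑ i, exp (a i) :=
  sum_pos (fun i _ => exp_pos (a i)) univ_nonempty

theorem softmax_pos [Nonempty ι] (a : ι → ℝ) (i : ι) : 0 < softmax a i :=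
  div_pos (exp_pos _) (sum_exp_pos a)

theorem sum_softmax [Nonempty ι] (a : ι → ℝ) : ∑ i, softmax a i = 1 := by
  simp only [softmax, ← sum_div, div_self (sum_exp_pos a).ne']

theorem log_softmax [Nonempty ι] (a : ι → ℝ) (i : ι) :
    log (softmax a i) = a i - logSumExp a := by
  rw [softmax, log_div (exp_pos _).ne' (sum_exp_pos a).ne', log_exp, logSumExp]

theorem le_logSumExp (a : ι → ℝ) (i : ι) : a i ≤ logSumExp a :=
  have : Nonempty ι := ⟨i⟩
  (le_log_iff_exp_le (sum_exp_pos a)).2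
    (single_le_sum (fun j _ => (exp_pos (a j)).le) (mem_univ i))

theorem logSumExp_add_const [Nonempty ι] (a : ι → ℝ) (c : ℝ) :
    logSumExp (fun i => a i + c) = logSumExp a + c := by
  simp only [logSumExp, exp_add, ← sum_mul]
  rw [log_mul (sum_exp_pos a).ne' (exp_pos c).ne', log_exp]

@[fun_prop]
theorem continuous_logSumExp [Nonempty ι] : Continuous (logSumExp : (ι → ℝ) → ℝ) :=
  (continuous_finsetSum _ fun i _ => continuous_exp.comp (continuous_apply i)).log
    fun a => (sum_exp_pos a).ne'

theorem hasDerivAt_logSumExp_add_mul [Nonempty ι] (a b : ι → ℝ) (t : ℝ) :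
    HasDerivAt (fun s => logSumExp fun i => a i + s * b i)
      (∑ i, softmax (fun i => a i + t * b i) i * b i) t := by
  have hsum : HasDerivAt (fun s => ∑ i, exp (a i + s * b i))
      (∑ i, exp (a i + t * b i) * b i) t :=
    HasDerivAt.fun_sum fun i _ => by
      simpa using (((hasDerivAt_id t).mul_const (b i)).const_add (a i)).exp
  refine (hsum.log (sum_exp_pos _).ne').congr_deriv ?_
  simp only [softmax, sum_div, div_mul_eq_mul_div]

/-- Gibbs' variational inequality. -/
theorem sum_mul_sub_sum_mul_log_div_le (a ν : ι → ℝ) (hν : ∀ i, 0 ≤ ν i) {w : ℝ}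
    (hw : ∑ i, ν i = w) :
    ∑ i, ν i * a i - ∑ i, ν i * log (ν i / w) ≤ w * logSumExp a := by
  have hw0 : 0 ≤ w := hw ▸ sum_nonneg fun i _ => hν i
  have key (i : ι) :
      ν i * a i - ν i * log (ν i / w) ≤ w * softmax a i - ν i + ν i * logSumExp a := by
    have : Nonempty ι := ⟨i⟩
    rcases (hν i).eq_or_lt with h | h
    · rw [← h]
      simpa using mul_nonneg hw0 (softmax_pos a i).le
    · have hwpos : 0 < w := hw ▸ (single_le_sum (fun j _ => hν j) (mem_univ i)).trans_lt' h
      have hlog := log_le_sub_one_of_pos (div_pos (softmax_pos a i) (div_pos h hwpos))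
      rw [log_div (softmax_pos a i).ne' (div_pos h hwpos).ne', log_softmax] at hlog
      have hmul : ν i * (softmax a i / (ν i / w)) = w * softmax a i := by field_simp
      have := mul_le_mul_of_nonneg_left hlog h.le
      rw [mul_sub, mul_sub, mul_sub, hmul, mul_one] at this
      linarith
  calc ∑ i, ν i * a i - ∑ i, ν i * log (ν i / w)
      ≤ ∑ i, (w * softmax a i - ν i + ν i * logSumExp a) := by
        rw [← sum_sub_distrib]; exact sum_le_sum fun i _ => key i
    _ = w * logSumExp a := by
        rcases isEmpty_or_nonempty ι with hι | hι
        · simp [← hw]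
        · rw [sum_add_distrib, sum_sub_distrib, ← mul_sum, ← sum_mul, sum_softmax, hw]
          ring

theorem sum_mul_sub_sum_mul_log_div_eq [Nonempty ι] (a : ι → ℝ) (w : ℝ) :
    ∑ i, w * softmax a i * a i - ∑ i, w * softmax a i * log (w * softmax a i / w)
      = w * logSumExp a := by
  rcases eq_or_ne w 0 with rfl | hw
  · simp
  simp only [mul_div_cancel_left₀ _ hw, log_softmax, ← sum_sub_distrib, ← mul_sub,
    sub_sub_cancel, ← sum_mul, ← mul_sum, sum_softmax, mul_one]

end LogSumExp

theorem mul_log_div_mul_eq (m : ℝ) {b c : ℝ} (hb : b ≠ 0) (hc : c ≠ 0) :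
    m * log (m / (b * c)) = m * log (m / b) - m * log c := by
  rcases eq_or_ne m 0 with rfl | hm
  · simp
  rw [← div_div, log_div (div_ne_zero hm hb) hc, mul_sub]

section Softmax

variable {X Y : Type*}

noncomputable def rowSoftmax [Fintype Y] (p : X → ℝ) (σ : ℝ) (U : X × Y → ℝ) (z : X × Y) : ℝ :=
  p z.1 * softmax (fun y => U (z.1, y) / σ) z.2

noncomputable def colSoftmax [Fintype X] (q : Y → ℝ) (σ : ℝ) (V : X × Y → ℝ) (z : X × Y) : ℝ :=
  q z.2 * softmax (fun x => V (x, z.2) / σ) z.1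

theorem sum_rowSoftmax [Fintype Y] [Nonempty Y] (p : X → ℝ) (σ : ℝ) (U : X × Y → ℝ) (x : X) :
    ∑ y, rowSoftmax p σ U (x, y) = p x := by
  simp only [rowSoftmax, ← mul_sum, sum_softmax, mul_one]

theorem sum_colSoftmax [Fintype X] [Nonempty X] (q : Y → ℝ) (σ : ℝ) (V : X × Y → ℝ) (y : Y) :
    ∑ x, colSoftmax q σ V (x, y) = q y := by
  simp only [colSoftmax, ← mul_sum, sum_softmax, mul_one]

end Softmax

section Couplings

variable {X Y : Type*} [Fintype X] [Fintype Y] (p : X → ℝ) (q : Y → ℝ)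

theorem sum_sum_mul_log_div_fst_eq (hp : ∀ x, p x ≠ 0) (hq : ∀ y, q y ≠ 0)
    {μ : X × Y → ℝ} (hμq : ∀ y, ∑ x, μ (x, y) = q y) :
    ∑ x, ∑ y, μ (x, y) * log (μ (x, y) / p x) = mutualInfo p q μ - entropy q := by
  have hcol : ∑ x, ∑ y, μ (x, y) * log (q y) = ∑ y, q y * log (q y) := by
    rw [sum_comm]; simp only [← sum_mul, hμq]
  simp only [mutualInfo, entropy, mul_log_div_mul_eq _ (hp _) (hq _), sum_sub_distrib, hcol]
  ring

theorem sum_sum_mul_log_div_snd_eq (hp : ∀ x, p x ≠ 0) (hq : ∀ y, q y ≠ 0)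
    {μ : X × Y → ℝ} (hμp : ∀ x, ∑ y, μ (x, y) = p x) :
    ∑ y, ∑ x, μ (x, y) * log (μ (x, y) / q y) = mutualInfo p q μ - entropy p := by
  have hrow : ∑ x, ∑ y, μ (x, y) * log (p x) = ∑ x, p x * log (p x) := by
    simp only [← sum_mul, hμp]
  simp only [mutualInfo, entropy, mul_comm (p _) (q _), mul_log_div_mul_eq _ (hq _) (hp _),
    sum_sub_distrib, hrow]
  rw [sum_comm]
  ring

noncomputable def dualObjective (σ₁ σ₂ : ℝ) (U V : X × Y → ℝ) : ℝ :=
  σ₁ * ∑ x, p x * logSumExp (fun y => U (x, y) / σ₁)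
    + σ₂ * ∑ y, q y * logSumExp (fun x => V (x, y) / σ₂)

theorem isCoupling_rowSoftmax [Nonempty X] [Nonempty Y] (hp : ∀ x, 0 ≤ p x) {σ₁ σ₂ : ℝ}
    {U V : X × Y → ℝ} (h : rowSoftmax p σ₁ U = colSoftmax q σ₂ V) :
    IsCoupling p q (rowSoftmax p σ₁ U) :=
  ⟨fun z => mul_nonneg (hp z.1) (softmax_pos _ _).le, sum_rowSoftmax p σ₁ U,
    h ▸ sum_colSoftmax q σ₂ V⟩

theorem welfare_add_entropy_eq (hp : ∀ x, p x ≠ 0) (hq : ∀ y, q y ≠ 0) {σ₁ σ₂ : ℝ}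
    (hσ₁ : σ₁ ≠ 0) (hσ₂ : σ₂ ≠ 0) (Φ U V μ : X × Y → ℝ)
    (hμp : ∀ x, ∑ y, μ (x, y) = p x) (hμq : ∀ y, ∑ x, μ (x, y) = q y) :
    (∑ x, ∑ y, μ (x, y) * Φ (x, y)) - (σ₁ + σ₂) * mutualInfo p q μ
        + σ₁ * entropy q + σ₂ * entropy p
      = ∑ x, ∑ y, μ (x, y) * (Φ (x, y) - U (x, y) - V (x, y))
        + σ₁ * ∑ x, (∑ y, μ (x, y) * (U (x, y) / σ₁) - ∑ y, μ (x, y) * log (μ (x, y) / p x))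
        + σ₂ * ∑ y, (∑ x, μ (x, y) * (V (x, y) / σ₂)
            - ∑ x, μ (x, y) * log (μ (x, y) / q y)) := by
  have hU : σ₁ * ∑ x, ∑ y, μ (x, y) * (U (x, y) / σ₁) = ∑ x, ∑ y, μ (x, y) * U (x, y) := by
    simp only [mul_sum]; congr! 2; field_simp
  have hV : σ₂ * ∑ y, ∑ x, μ (x, y) * (V (x, y) / σ₂) = ∑ x, ∑ y, μ (x, y) * V (x, y) := by
    rw [sum_comm]; simp only [mul_sum]; congr! 2; field_simp
  simp only [sum_sub_distrib, mul_sub, hU, hV,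
    sum_sum_mul_log_div_fst_eq p q hp hq hμq, sum_sum_mul_log_div_snd_eq p q hp hq hμp]
  ring

theorem welfare_add_entropy_le_dualObjective (hp : ∀ x, p x ≠ 0) (hq : ∀ y, q y ≠ 0)
    {σ₁ σ₂ : ℝ} (hσ₁ : 0 < σ₁) (hσ₂ : 0 < σ₂) {Φ U V μ : X × Y → ℝ}
    (hμ : IsCoupling p q μ) (hUV : ∀ x y, Φ (x, y) ≤ U (x, y) + V (x, y)) :
    (∑ x, ∑ y, μ (x, y) * Φ (x, y)) - (σ₁ + σ₂) * mutualInfo p q μ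
        + σ₁ * entropy q + σ₂ * entropy p ≤ dualObjective p q σ₁ σ₂ U V := by
  obtain ⟨hμ0, hμp, hμq⟩ := hμ
  rw [welfare_add_entropy_eq p q hp hq hσ₁.ne' hσ₂.ne' Φ U V μ hμp hμq]
  have hfeas : ∑ x, ∑ y, μ (x, y) * (Φ (x, y) - U (x, y) - V (x, y)) ≤ 0 :=
    sum_nonpos fun x _ => sum_nonpos fun y _ =>
      mul_nonpos_of_nonneg_of_nonpos (hμ0 _) (by linarith [hUV x y])
  have hrows := sum_le_sum fun x (_ : x ∈ univ) =>
    sum_mul_sub_sum_mul_log_div_le (fun y => U (x, y) / σ₁) _ (fun y => hμ0 (x, y)) (hμp x)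
  have hcols := sum_le_sum fun y (_ : y ∈ univ) =>
    sum_mul_sub_sum_mul_log_div_le (fun x => V (x, y) / σ₂) _ (fun x => hμ0 (x, y)) (hμq y)
  rw [dualObjective]
  linarith [mul_le_mul_of_nonneg_left hrows hσ₁.le, mul_le_mul_of_nonneg_left hcols hσ₂.le]

theorem welfare_add_entropy_rowSoftmax_eq_dualObjective [Nonempty X] [Nonempty Y]
    (hp : ∀ x, p x ≠ 0) (hq : ∀ y, q y ≠ 0) {σ₁ σ₂ : ℝ} (hσ₁ : σ₁ ≠ 0) (hσ₂ : σ₂ ≠ 0)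
    {Φ U : X × Y → ℝ} (h : rowSoftmax p σ₁ U = colSoftmax q σ₂ (Φ - U)) :
    (∑ x, ∑ y, rowSoftmax p σ₁ U (x, y) * Φ (x, y))
        - (σ₁ + σ₂) * mutualInfo p q (rowSoftmax p σ₁ U) + σ₁ * entropy q + σ₂ * entropy p
      = dualObjective p q σ₁ σ₂ U (Φ - U) := by
  rw [welfare_add_entropy_eq p q hp hq hσ₁ hσ₂ Φ U (Φ - U) _ (sum_rowSoftmax p σ₁ U)
    (h ▸ sum_colSoftmax q σ₂ (Φ - U)), dualObjective]
  have hrow (x : X) := sum_mul_sub_sum_mul_log_div_eq (fun y => U (x, y) / σ₁) (p x)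
  have hcol (y : Y) := sum_mul_sub_sum_mul_log_div_eq (fun x => (Φ - U) (x, y) / σ₂) (q y)
  simp only [Pi.sub_apply, sub_self, mul_zero, sum_const_zero, zero_add]
  congr 2
  · exact sum_congr rfl fun x _ => hrow x
  · rw [h]
    exact sum_congr rfl fun y _ => hcol y

theorem dualObjective_add_const_sub_const [Nonempty X] [Nonempty Y] {σ₁ σ₂ : ℝ}
    (hσ₁ : σ₁ ≠ 0) (hσ₂ : σ₂ ≠ 0) (hpq : ∑ x, p x = ∑ y, q y) (U V : X × Y → ℝ) (c : ℝ) :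
    dualObjective p q σ₁ σ₂ (fun z => U z + c) (fun z => V z - c)
      = dualObjective p q σ₁ σ₂ U V := by
  simp only [dualObjective, add_div, sub_eq_add_neg, logSumExp_add_const, mul_add,
    sum_add_distrib, ← sum_mul, hpq]
  field_simp
  ring

theorem continuous_dualObjective [Nonempty X] [Nonempty Y] (σ₁ σ₂ : ℝ) (Φ : X × Y → ℝ) :
    Continuous fun W => dualObjective p q σ₁ σ₂ W (Φ - W) := by
  unfold dualObjective
  fun_prop

theorem apply_sub_apply_le_dualObjective (hp : ∀ x, 0 < p x) (hq : ∀ y, 0 < q y)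
    (hps : ∑ x, p x = 1) (hqs : ∑ y, q y = 1) {σ₁ σ₂ : ℝ} (hσ₁ : 0 < σ₁) (hσ₂ : 0 < σ₂)
    {Φ : X × Y → ℝ} {m : ℝ} (hm : ∀ z, m ≤ Φ z) (W : X × Y → ℝ) (x x' : X) (y y' : Y) :
    W (x, y) - W (x', y') ≤ (dualObjective p q σ₁ σ₂ W (Φ - W) - m) * ((p x)⁻¹ + (q y')⁻¹) := by
  set ℓ₁ : X → ℝ := fun x => σ₁ * logSumExp (fun y => W (x, y) / σ₁)
  set ℓ₂ : Y → ℝ := fun y => σ₂ * logSumExp (fun x => (Φ - W) (x, y) / σ₂)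
  have hℓ₁ (x : X) (y : Y) : W (x, y) ≤ ℓ₁ x := by
    have := mul_le_mul_of_nonneg_left (le_logSumExp (fun y => W (x, y) / σ₁) y) hσ₁.le
    rwa [mul_div_cancel₀ _ hσ₁.ne'] at this
  have hℓ₂ (x : X) (y : Y) : m - W (x, y) ≤ ℓ₂ y := by
    have := mul_le_mul_of_nonneg_left (le_logSumExp (fun x => (Φ - W) (x, y) / σ₂) x) hσ₂.le
    rw [mul_div_cancel₀ _ hσ₂.ne'] at this
    linarith [hm (x, y), show (Φ - W) (x, y) = Φ (x, y) - W (x, y) from rfl]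
  have : Nonempty X := ⟨x⟩
  obtain ⟨x₁, hx₁⟩ := Finite.exists_min ℓ₁
  set a := ℓ₁ x₁
  have hG : dualObjective p q σ₁ σ₂ W (Φ - W) - m
      = ∑ x, p x * (ℓ₁ x - a) + ∑ y, q y * (ℓ₂ y - (m - a)) := by
    have hdual : dualObjective p q σ₁ σ₂ W (Φ - W) = ∑ x, p x * ℓ₁ x + ∑ y, q y * ℓ₂ y := by
      simp only [dualObjective, ℓ₁, ℓ₂, mul_sum, mul_left_comm σ₁, mul_left_comm σ₂]
    simp only [hdual, mul_sub, sum_sub_distrib, ← sum_mul, hps, hqs]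
    ring
  have hrows (x : X) : 0 ≤ p x * (ℓ₁ x - a) :=
    mul_nonneg (hp x).le (sub_nonneg.2 (hx₁ x))
  have hcols (y : Y) : 0 ≤ q y * (ℓ₂ y - (m - a)) :=
    mul_nonneg (hq y).le (by linarith [hℓ₁ x₁ y, hℓ₂ x₁ y])
  have hrow : p x * (W (x, y) - a) ≤ dualObjective p q σ₁ σ₂ W (Φ - W) - m :=
    calc p x * (W (x, y) - a) ≤ p x * (ℓ₁ x - a) :=
          mul_le_mul_of_nonneg_left (by linarith [hℓ₁ x y]) (hp x).le
      _ ≤ ∑ x, p x * (ℓ₁ x - a) := single_le_sum (fun x _ => hrows x) (mem_univ x)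
      _ ≤ _ := hG ▸ le_add_of_nonneg_right (sum_nonneg fun y _ => hcols y)
  have hcol : q y' * (a - W (x', y')) ≤ dualObjective p q σ₁ σ₂ W (Φ - W) - m :=
    calc q y' * (a - W (x', y')) ≤ q y' * (ℓ₂ y' - (m - a)) :=
          mul_le_mul_of_nonneg_left (by linarith [hℓ₂ x' y']) (hq y').le
      _ ≤ ∑ y, q y * (ℓ₂ y - (m - a)) := single_le_sum (fun y _ => hcols y) (mem_univ y')
      _ ≤ _ := hG ▸ le_add_of_nonneg_left (sum_nonneg fun x _ => hrows x)
  rw [mul_add, ← div_eq_mul_inv, ← div_eq_mul_inv]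
  linarith [(le_div_iff₀' (hp x)).2 hrow, (le_div_iff₀' (hq y')).2 hcol]

theorem exists_forall_dualObjective_le [Nonempty X] [Nonempty Y] (hp : ∀ x, 0 < p x)
    (hq : ∀ y, 0 < q y) (hps : ∑ x, p x = 1) (hqs : ∑ y, q y = 1) {σ₁ σ₂ : ℝ}
    (hσ₁ : 0 < σ₁) (hσ₂ : 0 < σ₂) (Φ : X × Y → ℝ) :
    ∃ U : X × Y → ℝ,
      ∀ W, dualObjective p q σ₁ σ₂ U (Φ - U) ≤ dualObjective p q σ₁ σ₂ W (Φ - W) := by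
  set G := fun W => dualObjective p q σ₁ σ₂ W (Φ - W)
  have hG : Continuous G := continuous_dualObjective p q σ₁ σ₂ Φ
  obtain ⟨zm, hzm⟩ := Finite.exists_min Φ
  obtain ⟨x₀, y₀⟩ : X × Y := Classical.arbitrary _
  set c := G 0 - Φ zm
  -- normalising `W (x₀, y₀) = 0` makes the sublevel set `G W ≤ G 0` compact
  set S := {W | W (x₀, y₀) = 0 ∧ G W ≤ G 0}
  have hSbox : S ⊆ Set.Icc (fun z => -(c * ((p x₀)⁻¹ + (q z.2)⁻¹)))
      (fun z => c * ((p z.1)⁻¹ + (q y₀)⁻¹)) := by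
    rintro W ⟨hW0, hWG⟩
    have hc (x : X) (y : Y) : (G W - Φ zm) * ((p x)⁻¹ + (q y)⁻¹) ≤ c * ((p x)⁻¹ + (q y)⁻¹) :=
      mul_le_mul_of_nonneg_right (by linarith) (by have := hp x; have := hq y; positivity)
    refine ⟨fun z => ?_, fun z => ?_⟩
    · have := apply_sub_apply_le_dualObjective p q hp hq hps hqs hσ₁ hσ₂ hzm W x₀ z.1 y₀ z.2
      linarith [hc x₀ z.2]
    · have := apply_sub_apply_le_dualObjective p q hp hq hps hqs hσ₁ hσ₂ hzm W z.1 x₀ z.2 y₀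
      linarith [hc z.1 y₀]
  have hSclosed : IsClosed S :=
    (isClosed_eq (continuous_apply _) continuous_const).inter (isClosed_le hG continuous_const)
  obtain ⟨U, -, hU⟩ := (isCompact_Icc.of_isClosed_subset hSclosed hSbox).exists_isMinOn
    ⟨0, rfl, le_rfl⟩ hG.continuousOn
  refine ⟨U, fun W => ?_⟩
  rcases le_or_gt (G W) (G 0) with hW | hW
  · have hshift : G (fun z => W z + -W (x₀, y₀)) = G W := by
      have hV : Φ - (fun z => W z + -W (x₀, y₀)) = fun z => (Φ - W) z - -W (x₀, y₀) := by
        funext z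
        simp only [Pi.sub_apply]
        ring
      rw [show G _ = dualObjective p q σ₁ σ₂ _ (Φ - _) from rfl, hV]
      exact dualObjective_add_const_sub_const p q hσ₁.ne' hσ₂.ne' (hps.trans hqs.symm) W _ _
    exact (hU ⟨add_neg_cancel _, hshift.trans_le hW⟩).trans_eq hshift
  · exact (hU ⟨rfl, le_rfl⟩).trans hW.le

theorem hasDerivAt_dualObjective_add_smul [Nonempty X] [Nonempty Y] {σ₁ σ₂ : ℝ}
    (hσ₁ : σ₁ ≠ 0) (hσ₂ : σ₂ ≠ 0) (U V D : X × Y → ℝ) :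
    HasDerivAt (fun t : ℝ => dualObjective p q σ₁ σ₂ (U + t • D) (V - t • D))
      (∑ x, ∑ y, (rowSoftmax p σ₁ U (x, y) - colSoftmax q σ₂ V (x, y)) * D (x, y)) 0 := by
  have hrows (x : X) := hasDerivAt_logSumExp_add_mul
    (fun y => U (x, y) / σ₁) (fun y => D (x, y) / σ₁) 0
  have hcols (y : Y) := hasDerivAt_logSumExp_add_mul
    (fun x => V (x, y) / σ₂) (fun x => -D (x, y) / σ₂) 0
  simp only [zero_mul, add_zero] at hrows hcols
  have h :=
    ((HasDerivAt.fun_sum (u := univ) fun x _ => (hrows x).const_mul (p x)).const_mul σ₁).add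
      ((HasDerivAt.fun_sum (u := univ) fun y _ => (hcols y).const_mul (q y)).const_mul σ₂)
  refine (h.congr_deriv ?_).congr_of_eventuallyEq (Filter.Eventually.of_forall fun t => ?_)
  · simp only [sub_mul, sum_sub_distrib]
    rw [sum_comm (f := fun x y => colSoftmax q σ₂ V (x, y) * D (x, y)), sub_eq_add_neg]
    simp only [mul_sum, ← sum_neg_distrib, rowSoftmax, colSoftmax]
    congr 1 <;> refine sum_congr rfl fun _ _ => sum_congr rfl fun _ _ => ?_ <;> field_simp
  · simp only [dualObjective, Pi.add_apply, Pi.sub_apply, Pi.smul_apply, smul_eq_mul, add_div,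
      mul_div_assoc, neg_div, mul_neg, sub_eq_add_neg]

theorem rowSoftmax_eq_colSoftmax_of_forall_le [Nonempty X] [Nonempty Y] {σ₁ σ₂ : ℝ}
    (hσ₁ : σ₁ ≠ 0) (hσ₂ : σ₂ ≠ 0) {Φ U : X × Y → ℝ}
    (hU : ∀ W, dualObjective p q σ₁ σ₂ U (Φ - U) ≤ dualObjective p q σ₁ σ₂ W (Φ - W)) :
    rowSoftmax p σ₁ U = colSoftmax q σ₂ (Φ - U) := by
  set D := rowSoftmax p σ₁ U - colSoftmax q σ₂ (Φ - U)
  have hmin : IsLocalMin (fun t : ℝ => dualObjective p q σ₁ σ₂ (U + t • D) (Φ - U - t • D)) 0 :=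
    Filter.Eventually.of_forall fun t => by simpa [sub_sub] using hU (U + t • D)
  have hD := hmin.hasDerivAt_eq_zero
    (hasDerivAt_dualObjective_add_smul p q hσ₁ hσ₂ U (Φ - U) D)
  change ∑ x, ∑ y, D (x, y) * D (x, y) = 0 at hD
  have hsq (x : X) (y : Y) : D (x, y) * D (x, y) = 0 := by
    rw [sum_eq_zero_iff_of_nonneg fun x _ => sum_nonneg fun y _ => mul_self_nonneg _] at hD
    exact (sum_eq_zero_iff_of_nonneg fun y _ => mul_self_nonneg _).1 (hD x (mem_univ x)) y
      (mem_univ y)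
  funext ⟨x, y⟩
  exact sub_eq_zero.1 (mul_self_eq_zero.1 (hsq x y))

end Couplings

theorem social_welfare_primal_dual
    {X Y : Type*} [Fintype X] [Fintype Y] [Nonempty X] [Nonempty Y]
    (p : X → ℝ) (q : Y → ℝ) (hp : ∀ x, 0 < p x) (hq : ∀ y, 0 < q y)
    (hps : ∑ x, p x = 1) (hqs : ∑ y, q y = 1)
    (σ₁ σ₂ : ℝ) (hσ₁ : 0 < σ₁) (hσ₂ : 0 < σ₂) (Φ : X × Y → ℝ) :
    ∃ M : ℝ,
      IsGreatest {m : ℝ | ∃ μ : X × Y → ℝ, IsCoupling p q μ ∧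
          m = (∑ x, ∑ y, μ (x, y) * Φ (x, y)) - (σ₁ + σ₂) * mutualInfo p q μ} M ∧
      sInf {s : ℝ | ∃ U V : X × Y → ℝ,
          (∀ x y, Φ (x, y) ≤ U (x, y) + V (x, y)) ∧
          s = σ₁ * ∑ x, p x * Real.log (∑ y, Real.exp (U (x, y) / σ₁))
            + σ₂ * ∑ y, q y * Real.log (∑ x, Real.exp (V (x, y) / σ₂))}
        = M + σ₁ * entropy q + σ₂ * entropy p := by
  have hp' (x : X) : p x ≠ 0 := (hp x).ne'
  have hq' (y : Y) : q y ≠ 0 := (hq y).ne'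
  obtain ⟨U, hU⟩ := exists_forall_dualObjective_le p q hp hq hps hqs hσ₁ hσ₂ Φ
  have hplan : rowSoftmax p σ₁ U = colSoftmax q σ₂ (Φ - U) :=
    rowSoftmax_eq_colSoftmax_of_forall_le p q hσ₁.ne' hσ₂.ne' hU
  have hμ := isCoupling_rowSoftmax p q (fun x => (hp x).le) hplan
  have hfeas (x : X) (y : Y) : Φ (x, y) ≤ U (x, y) + (Φ - U) (x, y) := by simp
  have hgap := welfare_add_entropy_rowSoftmax_eq_dualObjective p q hp' hq' hσ₁.ne' hσ₂.ne' hplan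
  refine ⟨_, ⟨⟨_, hμ, rfl⟩, ?_⟩, IsLeast.csInf_eq ⟨⟨U, Φ - U, hfeas, hgap⟩, ?_⟩⟩
  · rintro _ ⟨ν, hν, rfl⟩
    linarith [welfare_add_entropy_le_dualObjective p q hp' hq' hσ₁ hσ₂ hν hfeas]
  · rintro _ ⟨U', V', hUV', rfl⟩
    exact welfare_add_entropy_le_dualObjective p q hp' hq' hσ₁ hσ₂ hμ hUV'
end

section
/- Let Φ : X × Y → ℝ. Then the maximum over couplings π ∈ M(p,q) of Σ_{x,y} π(x,y) Φ(x,y) is attained and equals the infimum, over all pairs of functions u : X → ℝ and v : Y → ℝ satisfying u(x) + v(y) ≥ Φ(x,y) for all (x,y), of Σ_x p(x) u(x) + Σ_y q(y) v(y). -/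
/-!
Weak duality comes from summing `Φ ≤ u ⊕ v` (written `potentialSum u v`) against a coupling, and
the maximum `M` over couplings is attained because couplings form a compact set. For strong
duality, suppose no admissible `(u, v)` has value `M + ε`. Then the open convex set `{w | Φ < w}`
is disjoint from the affine set `{u ⊕ v | ⟪p, u⟫ + ⟪q, v⟫ = M + ε}`, and a separating functional
`b` must be nonnegative with marginals `(∑ b) • p` and `(∑ b) • q`. So `b / ∑ b` is a coupling,
giving `⟪b, Φ⟫ ≤ (∑ b) M`, whereas separation at `Φ + ε` gives `(∑ b)(M + ε) < ⟪b, Φ⟫ + ε ∑ b`.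
-/

open Finset Real

open Matrix

lemma nonneg_of_forall_pos_lt_add_mul {x s d : ℝ} (h : ∀ t > 0, d < x + t * s) : 0 ≤ s := by
  by_contra! hs
  have := h ((|x - d| + 1) / -s) (div_pos (by positivity) (neg_pos.mpr hs))
  rw [div_neg, neg_mul, div_mul_cancel₀ _ hs.ne] at this
  linarith [le_abs_self (x - d)]

lemma eq_zero_of_forall_add_mul_le {x s d : ℝ} (h : ∀ t, x + t * s ≤ d) : s = 0 := by
  by_contra hs
  have := h ((|d - x| + 1) / s)
  rw [div_mul_cancel₀ _ hs] at this
  linarith [le_abs_self (d - x)]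

theorem exists_dotProduct_separation {ι : Type*} [Fintype ι] {s t : Set (ι → ℝ)}
    (hs₁ : Convex ℝ s) (hs₂ : IsOpen s) (ht : Convex ℝ t) (disj : Disjoint s t) :
    ∃ (b : ι → ℝ) (d : ℝ), (∀ w ∈ s, d < b ⬝ᵥ w) ∧ ∀ w ∈ t, b ⬝ᵥ w ≤ d := by
  classical
  obtain ⟨f, c, hs, ht⟩ := geometric_hahn_banach_open hs₁ hs₂ ht disj
  set a : ι → ℝ := fun i ↦ f (Pi.single i 1)
  have hf (w : ι → ℝ) : f w = a ⬝ᵥ w := by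
    conv_lhs => rw [pi_eq_sum_univ' w]
    simp [a, dotProduct, mul_comm]
  refine ⟨-a, -c, fun w hw ↦ ?_, fun w hw ↦ ?_⟩
  · rw [neg_dotProduct, ← hf]; linarith [hs w hw]
  · rw [neg_dotProduct, ← hf]; linarith [ht w hw]

lemma nonneg_of_forall_lt_dotProduct {ι : Type*} [Fintype ι] [DecidableEq ι] {Φ b : ι → ℝ}
    {d : ℝ} (h : ∀ w, (∀ i, Φ i < w i) → d < b ⬝ᵥ w) (i : ι) : 0 ≤ b i := by
  refine nonneg_of_forall_pos_lt_add_mul (x := b ⬝ᵥ (Φ + 1)) (d := d) fun t ht ↦ ?_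
  have hw := h (Φ + 1 + t • Pi.single i 1) fun j ↦ ?_
  · simpa [dotProduct_add, dotProduct_smul, mul_comm] using hw
  · have : 0 ≤ t * (Pi.single i 1 : ι → ℝ) j :=
      mul_nonneg ht.le (by rw [Pi.single_apply]; split_ifs <;> norm_num)
    simp only [Pi.add_apply, Pi.one_apply, Pi.smul_apply, smul_eq_mul]
    linarith

section Coupling

variable {X Y : Type*} [Fintype X] [Fintype Y] {p : X → ℝ} {q : Y → ℝ}

def potentialSum (u : X → ℝ) (v : Y → ℝ) : X × Y → ℝ := fun z ↦ u z.1 + v z.2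

lemma dotProduct_potentialSum (μ : X × Y → ℝ) (u : X → ℝ) (v : Y → ℝ) :
    μ ⬝ᵥ potentialSum u v = (fun x ↦ ∑ y, μ (x, y)) ⬝ᵥ u + (fun y ↦ ∑ x, μ (x, y)) ⬝ᵥ v := by
  simp only [dotProduct, potentialSum, Fintype.sum_prod_type, mul_add, sum_add_distrib, sum_mul]
  rw [sum_comm (s := univ) (t := univ) (f := fun x y ↦ μ (x, y) * v y)]

lemma IsCoupling.dotProduct_le {μ Φ : X × Y → ℝ} (hμ : IsCoupling p q μ) {u : X → ℝ} {v : Y → ℝ}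
    (huv : ∀ x y, Φ (x, y) ≤ u x + v y) : μ ⬝ᵥ Φ ≤ p ⬝ᵥ u + q ⬝ᵥ v := by
  obtain ⟨hμ₀, hμp, hμq⟩ := hμ
  calc μ ⬝ᵥ Φ ≤ μ ⬝ᵥ potentialSum u v :=
        sum_le_sum fun z _ ↦ mul_le_mul_of_nonneg_left (huv z.1 z.2) (hμ₀ z)
    _ = p ⬝ᵥ u + q ⬝ᵥ v := by
      rw [dotProduct_potentialSum, funext hμp, funext hμq]

lemma isCoupling_mul (hp : ∀ x, 0 ≤ p x) (hq : ∀ y, 0 ≤ q y) (hps : ∑ x, p x = 1)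
    (hqs : ∑ y, q y = 1) : IsCoupling p q fun z ↦ p z.1 * q z.2 :=
  ⟨fun z ↦ mul_nonneg (hp z.1) (hq z.2), fun x ↦ by simp [← mul_sum, hqs],
    fun y ↦ by simp [← sum_mul, hps]⟩

lemma isCompact_setOf_isCoupling (p : X → ℝ) (q : Y → ℝ) :
    IsCompact {μ : X × Y → ℝ | IsCoupling p q μ} := by
  have hclosed : IsClosed {μ : X × Y → ℝ | IsCoupling p q μ} := by
    simp only [IsCoupling, Set.ofPred_and, Set.ofPred_forall]
    refine .inter (isClosed_iInter fun _ ↦ isClosed_le ?_ ?_) <| .inter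
      (isClosed_iInter fun _ ↦ isClosed_eq ?_ ?_) (isClosed_iInter fun _ ↦ isClosed_eq ?_ ?_)
      <;> fun_prop
  refine (isCompact_univ_pi fun z ↦ isCompact_Icc (a := 0) (b := p z.1)).of_isClosed_subset
    hclosed fun μ ⟨hμ₀, hμp, _⟩ z _ ↦ ⟨hμ₀ z, ?_⟩
  rw [← hμp z.1]
  exact single_le_sum (fun y _ ↦ hμ₀ (z.1, y)) (mem_univ z.2)

lemma marginals_eq_of_dotProduct_le (hps : ∑ x, p x = 1) (hqs : ∑ y, q y = 1)
    {b : X × Y → ℝ} {r d : ℝ}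
    (h : ∀ u v, p ⬝ᵥ u + q ⬝ᵥ v = r → b ⬝ᵥ potentialSum u v ≤ d) :
    (∀ x, ∑ y, b (x, y) = (∑ z, b z) * p x) ∧ (∀ y, ∑ x, b (x, y) = (∑ z, b z) * q y) ∧
      (∑ z, b z) * r ≤ d := by
  classical
  set R : X → ℝ := fun x ↦ ∑ y, b (x, y)
  set C : Y → ℝ := fun y ↦ ∑ x, b (x, y)
  have hR : ∑ x, R x = ∑ z, b z := (Fintype.sum_prod_type b).symm
  have hC : ∑ y, C y = ∑ z, b z := (Fintype.sum_prod_type_right b).symm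
  have hRC (u v) (huv : p ⬝ᵥ u + q ⬝ᵥ v = r) : R ⬝ᵥ u + C ⬝ᵥ v ≤ d := by
    rw [← dotProduct_potentialSum]; exact h u v huv
  refine ⟨fun x ↦ ?_, fun y ↦ ?_, ?_⟩
  · refine sub_eq_zero.mp (eq_zero_of_forall_add_mul_le (x := r * ∑ z, b z) (d := d) fun t ↦ ?_)
    have := hRC (r • 1 + t • (Pi.single x 1 - p x • 1)) 0 (by
      simp [dotProduct_add, dotProduct_sub, dotProduct_smul, dotProduct_one, hps])
    simpa [dotProduct_add, dotProduct_sub, dotProduct_smul, dotProduct_one, hR, mul_comm] using this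
  · refine sub_eq_zero.mp (eq_zero_of_forall_add_mul_le (x := r * ∑ z, b z) (d := d) fun t ↦ ?_)
    have := hRC 0 (r • 1 + t • (Pi.single y 1 - q y • 1)) (by
      simp [dotProduct_add, dotProduct_sub, dotProduct_smul, dotProduct_one, hqs])
    simpa [dotProduct_add, dotProduct_sub, dotProduct_smul, dotProduct_one, hC, mul_comm] using this
  · simpa [dotProduct_smul, dotProduct_one, hR, mul_comm] using
      hRC (r • 1) 0 (by simp [dotProduct_smul, dotProduct_one, hps])

lemma dotProduct_le_mul_of_marginals {Φ b : X × Y → ℝ} {M : ℝ}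
    (hM : ∀ μ, IsCoupling p q μ → μ ⬝ᵥ Φ ≤ M) (hb : ∀ z, 0 ≤ b z)
    (hbp : ∀ x, ∑ y, b (x, y) = (∑ z, b z) * p x) (hbq : ∀ y, ∑ x, b (x, y) = (∑ z, b z) * q y) :
    b ⬝ᵥ Φ ≤ (∑ z, b z) * M := by
  rcases (sum_nonneg fun z _ ↦ hb z).eq_or_lt with hs | hs
  · have hb0 : b = 0 :=
      funext fun z ↦ (sum_eq_zero_iff_of_nonneg fun z _ ↦ hb z).mp hs.symm z (mem_univ z)
    simp [hb0]
  · have hμ : IsCoupling p q ((∑ z, b z)⁻¹ • b) :=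
      ⟨fun z ↦ by simpa using mul_nonneg (inv_nonneg.mpr hs.le) (hb z),
       fun x ↦ by simp [← mul_sum, hbp, hs.ne'], fun y ↦ by simp [← mul_sum, hbq, hs.ne']⟩
    have := hM _ hμ
    rwa [smul_dotProduct, smul_eq_mul, inv_mul_le_iff₀ hs] at this

theorem exists_potentials_of_forall_dotProduct_le (hps : ∑ x, p x = 1) (hqs : ∑ y, q y = 1)
    {Φ : X × Y → ℝ} {M ε : ℝ} (hM : ∀ μ, IsCoupling p q μ → μ ⬝ᵥ Φ ≤ M) (hε : 0 < ε) :
    ∃ u v, (∀ x y, Φ (x, y) ≤ u x + v y) ∧ p ⬝ᵥ u + q ⬝ᵥ v = M + ε := by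
  classical
  by_contra! hno
  set S : Set (X × Y → ℝ) := Set.univ.pi fun z ↦ Set.Ioi (Φ z)
  set T : Set (X × Y → ℝ) :=
    (fun uv : (X → ℝ) × (Y → ℝ) ↦ potentialSum uv.1 uv.2) ''
      {uv | p ⬝ᵥ uv.1 + q ⬝ᵥ uv.2 = M + ε}
  have hST : Disjoint S T := by
    rw [Set.disjoint_left]
    rintro _ hS ⟨⟨u, v⟩, huv, rfl⟩
    exact hno u v (fun x y ↦ (Set.mem_univ_pi.mp hS (x, y)).le) huv
  have hT : Convex ℝ T := by
    refine (convex_hyperplane ⟨fun a b ↦ ?_, fun c a ↦ ?_⟩ _).is_linear_image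
      ⟨fun a b ↦ funext fun z ↦ ?_, fun c a ↦ funext fun z ↦ ?_⟩ <;>
    simp [potentialSum, dotProduct_add, dotProduct_smul] <;> ring
  obtain ⟨b, d, hbS, hbT⟩ := exists_dotProduct_separation
    (convex_pi fun z _ ↦ convex_Ioi (Φ z)) (isOpen_set_pi Set.finite_univ fun z _ ↦ isOpen_Ioi)
    hT hST
  have hb : ∀ z, 0 ≤ b z := nonneg_of_forall_lt_dotProduct fun w hw ↦ hbS w (by simpa [S] using hw)
  obtain ⟨hbp, hbq, hd⟩ :=
    marginals_eq_of_dotProduct_le hps hqs fun u v huv ↦ hbT _ ⟨(u, v), huv, rfl⟩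
  have hΦ := dotProduct_le_mul_of_marginals hM hb hbp hbq
  have hlt := hbS (Φ + ε • 1) (by simp [hε])
  rw [dotProduct_add, dotProduct_smul, dotProduct_one, smul_eq_mul] at hlt
  linarith

end Coupling

theorem kantorovich_duality_discrete_general
    {X Y : Type*} [Fintype X] [Fintype Y]
    (p : X → ℝ) (q : Y → ℝ) (hp : ∀ x, 0 < p x) (hq : ∀ y, 0 < q y)
    (hps : ∑ x, p x = 1) (hqs : ∑ y, q y = 1) (Φ : X × Y → ℝ) :
    ∃ M : ℝ,
      IsGreatest {m : ℝ | ∃ μ : X × Y → ℝ, IsCoupling p q μ ∧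
          m = ∑ x, ∑ y, μ (x, y) * Φ (x, y)} M ∧
      sInf {s : ℝ | ∃ (u : X → ℝ) (v : Y → ℝ),
          (∀ x y, Φ (x, y) ≤ u x + v y) ∧
          s = ∑ x, p x * u x + ∑ y, q y * v y} = M := by
  simp only [← Fintype.sum_prod_type']
  change ∃ M, IsGreatest {m | ∃ μ, IsCoupling p q μ ∧ m = μ ⬝ᵥ Φ} M ∧
    sInf {s | ∃ u v, (∀ x y, Φ (x, y) ≤ u x + v y) ∧ s = p ⬝ᵥ u + q ⬝ᵥ v} = M
  obtain ⟨μ₀, hμ₀, hmax⟩ := (isCompact_setOf_isCoupling p q).exists_isMaxOn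
    ⟨_, isCoupling_mul (fun x ↦ (hp x).le) (fun y ↦ (hq y).le) hps hqs⟩
    (continuous_id.dotProduct continuous_const).continuousOn
  have hM : ∀ μ, IsCoupling p q μ → μ ⬝ᵥ Φ ≤ μ₀ ⬝ᵥ Φ := fun μ hμ ↦ hmax hμ
  refine ⟨μ₀ ⬝ᵥ Φ, ⟨⟨μ₀, hμ₀, rfl⟩, fun _ ⟨μ, hμ, hm⟩ ↦ hm ▸ hM μ hμ⟩, IsGLB.csInf_eq ⟨?_, ?_⟩ ?_⟩
  · rintro _ ⟨u, v, huv, rfl⟩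
    exact hμ₀.dotProduct_le huv
  · refine fun m hm ↦ le_of_forall_pos_le_add fun ε hε ↦ ?_
    obtain ⟨u, v, huv, hval⟩ := exists_potentials_of_forall_dotProduct_le hps hqs hM hε
    exact hm ⟨u, v, huv, hval.symm⟩
  · obtain ⟨u, v, huv, -⟩ := exists_potentials_of_forall_dotProduct_le hps hqs hM one_pos
    exact ⟨_, u, v, huv, rfl⟩

theorem kantorovich_duality_discrete
    {X Y : Type*} [Fintype X] [Fintype Y] [Nonempty X] [Nonempty Y]
    (p : X → ℝ) (q : Y → ℝ) (hp : ∀ x, 0 < p x) (hq : ∀ y, 0 < q y)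
    (hps : ∑ x, p x = 1) (hqs : ∑ y, q y = 1) (Φ : X × Y → ℝ) :
    ∃ M : ℝ,
      IsGreatest {m : ℝ | ∃ μ : X × Y → ℝ, IsCoupling p q μ ∧
          m = ∑ x, ∑ y, μ (x, y) * Φ (x, y)} M ∧
      sInf {s : ℝ | ∃ (u : X → ℝ) (v : Y → ℝ),
          (∀ x y, Φ (x, y) ≤ u x + v y) ∧
          s = ∑ x, p x * u x + ∑ y, q y * v y} = M :=
  kantorovich_duality_discrete_general p q hp hq hps hqs Φ
end

section
/- Let Φ : X × Y → ℝ. There exist functions u : X → ℝ and v : Y → ℝ with u(x) + v(y) ≥ Φ(x,y) for all (x,y) attaining the infimum of Σ_x p(x) u(x) + Σ_y q(y) v(y) over all such pairs; and for any such optimal pair (u,v), a coupling π ∈ M(p,q) attains the maximum of Σ_{x,y} π(x,y) Φ(x,y) over M(p,q) if and only if π(x,y) = 0 whenever u(x) + v(y) > Φ(x,y). -/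
open Finset Real

/-!
For fixed `v` the best `u` is the `c`-transform `x ↦ max_y (Φ (x, y) - v y)`, so the dual problem
is the minimisation of a continuous function of `v` alone. It is invariant under adding constants
to `v`, and replacing `v` by its double `c`-transform lowers it while bounding its oscillation by
`2 ‖Φ‖`, so a minimiser exists in a ball. At a minimiser `v`, the target `q` is the second marginal
of some plan with first marginal `p` supported where the constraint is tight: otherwise a
hyperplane separating `q` from these marginals gives a direction `w` along which `v - t • w`
lowers the dual objective. That plan is a coupling satisfying complementary slackness, so its
value equals the dual optimum, and weak duality characterises the optimal couplings.
-/

open Filter Topology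

section CTransform

variable {α β : Type*} [Fintype β] [Nonempty β]

noncomputable def cTransform (c : α → β → ℝ) (v : β → ℝ) (a : α) : ℝ :=
  univ.sup' univ_nonempty fun b => c a b - v b

theorem sub_le_cTransform (c : α → β → ℝ) (v : β → ℝ) (a : α) (b : β) :
    c a b - v b ≤ cTransform c v a :=
  le_sup' (fun b => c a b - v b) (mem_univ b)

theorem le_cTransform_add (c : α → β → ℝ) (v : β → ℝ) (a : α) (b : β) :
    c a b ≤ cTransform c v a + v b := by
  linarith [sub_le_cTransform c v a b]

theorem cTransform_le_iff {c : α → β → ℝ} {v : β → ℝ} {a : α} {r : ℝ} :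
    cTransform c v a ≤ r ↔ ∀ b, c a b - v b ≤ r := by
  simp [cTransform]

theorem exists_eq_cTransform (c : α → β → ℝ) (v : β → ℝ) (a : α) :
    ∃ b, c a b - v b = cTransform c v a := by
  obtain ⟨b, -, hb⟩ := exists_mem_eq_sup' univ_nonempty fun b => c a b - v b
  exact ⟨b, hb.symm⟩

theorem cTransform_sub_const (c : α → β → ℝ) (v : β → ℝ) (r : ℝ) (a : α) :
    cTransform c (fun b => v b - r) a = cTransform c v a + r := by
  refine le_antisymm (cTransform_le_iff.2 fun b => ?_) ?_
  · linarith [sub_le_cTransform c v a b]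
  · obtain ⟨b, hb⟩ := exists_eq_cTransform c v a
    linarith [sub_le_cTransform c (fun b => v b - r) a b]

theorem abs_cTransform_sub_cTransform_le {c : α → β → ℝ} {v : β → ℝ} {C : ℝ}
    (hC : ∀ a b, |c a b| ≤ C) (a a' : α) :
    |cTransform c v a - cTransform c v a'| ≤ 2 * C := by
  suffices h : ∀ a a', cTransform c v a - cTransform c v a' ≤ 2 * C by
    exact abs_sub_le_iff.2 ⟨h a a', h a' a⟩
  intro a a'
  obtain ⟨b, hb⟩ := exists_eq_cTransform c v a
  have := sub_le_cTransform c v a' b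
  linarith [(abs_le.1 (hC a b)).2, (abs_le.1 (hC a' b)).1]

theorem continuous_cTransform (c : α → β → ℝ) (a : α) :
    Continuous fun v : β → ℝ => cTransform c v a :=
  Continuous.finset_sup'_apply univ_nonempty fun b _ => continuous_const.sub (continuous_apply b)

theorem eventually_cTransform_sub_smul_le {c : α → β → ℝ} {v : β → ℝ} (a : α) (w : β → ℝ)
    {m : ℝ} (hm : ∀ b, c a b - v b = cTransform c v a → w b ≤ m) :
    ∀ᶠ t in 𝓝[>] (0 : ℝ), cTransform c (v - t • w) a ≤ cTransform c v a + t * m := by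
  simp only [cTransform_le_iff, Pi.sub_apply, Pi.smul_apply, smul_eq_mul, eventually_all]
  intro b
  by_cases hb : c a b - v b = cTransform c v a
  · filter_upwards [self_mem_nhdsWithin] with t ht
    nlinarith [hm b hb, Set.mem_Ioi.1 ht]
  · have hlt : c a b - v b < cTransform c v a :=
      (sub_le_cTransform c v a b).lt_of_ne hb
    have : ∀ᶠ t in 𝓝 (0 : ℝ), c a b - v b + t * w b < cTransform c v a + t * m :=
      ContinuousAt.eventually_lt (by fun_prop) (by fun_prop) (by simpa using hlt)
    filter_upwards [nhdsWithin_le_nhds this] with t ht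
    linarith

end CTransform

namespace IsCoupling

variable {X Y : Type*} [Fintype X] [Fintype Y] {p : X → ℝ} {q : Y → ℝ} {μ : X × Y → ℝ}

theorem sum_mul_add (hμ : IsCoupling p q μ) (u : X → ℝ) (v : Y → ℝ) :
    ∑ x, ∑ y, μ (x, y) * (u x + v y) = ∑ x, p x * u x + ∑ y, q y * v y := by
  obtain ⟨-, hp, hq⟩ := hμ
  simp only [mul_add, sum_add_distrib]
  rw [sum_comm (f := fun x y => μ (x, y) * v y)]
  simp only [← sum_mul, hp, hq]

variable {Φ : X × Y → ℝ} {u : X → ℝ} {v : Y → ℝ}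

theorem sum_mul_le (hμ : IsCoupling p q μ) (huv : ∀ x y, Φ (x, y) ≤ u x + v y) :
    ∑ x, ∑ y, μ (x, y) * Φ (x, y) ≤ ∑ x, p x * u x + ∑ y, q y * v y :=
  hμ.sum_mul_add u v ▸ sum_le_sum fun x _ => sum_le_sum fun y _ =>
    mul_le_mul_of_nonneg_left (huv x y) (hμ.1 (x, y))

theorem sum_mul_eq_iff (hμ : IsCoupling p q μ) (huv : ∀ x y, Φ (x, y) ≤ u x + v y) :
    ∑ x, ∑ y, μ (x, y) * Φ (x, y) = ∑ x, p x * u x + ∑ y, q y * v y ↔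
      ∀ x y, Φ (x, y) < u x + v y → μ (x, y) = 0 := by
  have hle : ∀ x y, μ (x, y) * Φ (x, y) ≤ μ (x, y) * (u x + v y) := fun x y =>
    mul_le_mul_of_nonneg_left (huv x y) (hμ.1 (x, y))
  rw [← hμ.sum_mul_add u v, sum_eq_sum_iff_of_le fun x _ => sum_le_sum fun y _ => hle x y]
  simp only [mem_univ, forall_const, sum_eq_sum_iff_of_le fun y _ => hle _ y]
  refine forall₂_congr fun x y => ⟨fun h hlt => ?_, fun h => ?_⟩
  · by_contra hne
    exact hlt.ne (mul_left_cancel₀ hne h)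
  · rcases (huv x y).lt_or_eq with hlt | heq
    · simp [h hlt]
    · rw [heq]

end IsCoupling

section ReducedDual

variable {X Y : Type*} [Fintype X] [Fintype Y] [Nonempty Y] {p : X → ℝ} {q : Y → ℝ}
  {Φ : X × Y → ℝ}

variable (p q Φ) in
/-- The dual objective `∑ p u + ∑ q v`, minimised over `u` for fixed `v`. -/
noncomputable def reducedDual (v : Y → ℝ) : ℝ :=
  ∑ x, p x * cTransform (fun x y => Φ (x, y)) v x + ∑ y, q y * v y

theorem reducedDual_le (hp : ∀ x, 0 ≤ p x) {u : X → ℝ} {v : Y → ℝ}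
    (huv : ∀ x y, Φ (x, y) ≤ u x + v y) :
    reducedDual p q Φ v ≤ ∑ x, p x * u x + ∑ y, q y * v y := by
  refine add_le_add_left (sum_le_sum fun x _ => mul_le_mul_of_nonneg_left ?_ (hp x)) _
  exact cTransform_le_iff.2 fun y => by linarith [huv x y]

theorem reducedDual_sub_const (hpq : ∑ x, p x = ∑ y, q y) (v : Y → ℝ) (r : ℝ) :
    reducedDual p q Φ (fun y => v y - r) = reducedDual p q Φ v := by
  simp only [reducedDual, cTransform_sub_const, mul_add, mul_sub, sum_add_distrib,
    sum_sub_distrib, ← sum_mul, hpq]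
  ring

theorem continuous_reducedDual : Continuous (reducedDual p q Φ) := by
  unfold reducedDual
  have := continuous_cTransform (fun x y => Φ (x, y))
  fun_prop

variable [Nonempty X]

theorem exists_norm_le_reducedDual_le (hp : ∀ x, 0 ≤ p x) (hq : ∀ y, 0 ≤ q y)
    (hpq : ∑ x, p x = ∑ y, q y) (v : Y → ℝ) :
    ∃ v', ‖v'‖ ≤ 2 * ‖Φ‖ ∧ reducedDual p q Φ v' ≤ reducedDual p q Φ v := by
  obtain ⟨y₀⟩ := ‹Nonempty Y›
  set u := cTransform (fun x y => Φ (x, y)) v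
  set v₁ := cTransform (fun y x => Φ (x, y)) u
  have hv₁ : ∀ y, v₁ y ≤ v y := fun y =>
    cTransform_le_iff.2 fun x => by linarith [le_cTransform_add (fun x y => Φ (x, y)) v x y]
  have hC : ∀ y x, |Φ (x, y)| ≤ ‖Φ‖ := fun y x => norm_le_pi_norm Φ (x, y)
  refine ⟨fun y => v₁ y - v₁ y₀, ?_, ?_⟩
  · exact (pi_norm_le_iff_of_nonneg (by positivity)).2 fun y =>
      abs_cTransform_sub_cTransform_le hC y y₀
  calc reducedDual p q Φ (fun y => v₁ y - v₁ y₀)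
      = reducedDual p q Φ v₁ := reducedDual_sub_const hpq v₁ _
    _ ≤ ∑ x, p x * u x + ∑ y, q y * v₁ y := reducedDual_le hp fun x y => by
        linarith [le_cTransform_add (fun y x => Φ (x, y)) u y x]
    _ ≤ reducedDual p q Φ v := add_le_add_right (sum_le_sum fun y _ =>
        mul_le_mul_of_nonneg_left (hv₁ y) (hq y)) _

theorem exists_forall_reducedDual_le (hp : ∀ x, 0 ≤ p x) (hq : ∀ y, 0 ≤ q y)
    (hpq : ∑ x, p x = ∑ y, q y) :
    ∃ v₀, ∀ v, reducedDual p q Φ v₀ ≤ reducedDual p q Φ v := by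
  obtain ⟨v₀, -, hv₀⟩ := (isCompact_closedBall (0 : Y → ℝ) (2 * ‖Φ‖)).exists_isMinOn
    ⟨0, Metric.mem_closedBall_self (by positivity)⟩
    (continuous_reducedDual (p := p) (q := q) (Φ := Φ)).continuousOn
  refine ⟨v₀, fun v => ?_⟩
  obtain ⟨v', hv'Φ, hv'⟩ := exists_norm_le_reducedDual_le hp hq hpq v
  exact (hv₀ (mem_closedBall_zero_iff.2 hv'Φ)).trans hv'

end ReducedDual

theorem exists_sum_mul_lt_of_notMem {Y : Type*} [Fintype Y] {K : Set (Y → ℝ)}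
    (hK : Convex ℝ K) (hKc : IsClosed K) {q : Y → ℝ} (hq : q ∉ K) :
    ∃ w : Y → ℝ, ∀ a ∈ K, ∑ y, a y * w y < ∑ y, q y * w y := by
  classical
  obtain ⟨f, c, hf, hc⟩ := geometric_hahn_banach_closed_point hK hKc hq
  have hf_eq (a : Y → ℝ) : f a = ∑ y, a y * f fun j => if y = j then 1 else 0 :=
    LinearMap.pi_apply_eq_sum_univ f.toLinearMap a
  exact ⟨fun y => f fun j => if y = j then 1 else 0, fun a ha => by
    rw [← hf_eq, ← hf_eq]
    exact (hf a ha).trans hc⟩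

section StrongDuality

variable {X Y : Type*} [Fintype Y]

/-- Nonnegative plans with first marginal `p` vanishing on `N`; such a plan is a coupling of `p`
and `q` exactly when its `secondMarginal` is `q`. -/
def semiCouplings (p : X → ℝ) (N : Set (X × Y)) : Set (X × Y → ℝ) :=
  {μ | (∀ z, 0 ≤ μ z) ∧ (∀ x, ∑ y, μ (x, y) = p x) ∧ ∀ z ∈ N, μ z = 0}

def secondMarginal [Fintype X] : (X × Y → ℝ) →ₗ[ℝ] (Y → ℝ) where
  toFun μ y := ∑ x, μ (x, y)
  map_add' μ ν := by ext y; simp [sum_add_distrib]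
  map_smul' r μ := by ext y; simp [mul_sum]

theorem convex_semiCouplings (p : X → ℝ) (N : Set (X × Y)) :
    Convex ℝ (semiCouplings p N) := by
  rintro μ ⟨hμ0, hμp, hμN⟩ ν ⟨hν0, hνp, hνN⟩ a b ha hb hab
  refine ⟨fun z => ?_, fun x => ?_, fun z hz => ?_⟩
  · have := hμ0 z
    have := hν0 z
    simp only [Pi.add_apply, Pi.smul_apply, smul_eq_mul]
    positivity
  · simp [sum_add_distrib, ← mul_sum, hμp, hνp, ← add_mul, hab]
  · simp [hμN z hz, hνN z hz]

theorem isCompact_semiCouplings (p : X → ℝ) (N : Set (X × Y)) :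
    IsCompact (semiCouplings p N) := by
  refine (isCompact_Icc (a := 0) (b := fun z => p z.1)).of_isClosed_subset ?_
    fun μ hμ => ⟨hμ.1, fun z => ?_⟩
  · simp only [semiCouplings, Set.ofPred_and, Set.ofPred_forall]
    exact (isClosed_iInter fun z => isClosed_le continuous_const (continuous_apply z)).inter
      ((isClosed_iInter fun x => isClosed_eq (by fun_prop) continuous_const).inter
        (isClosed_iInter fun z => isClosed_iInter fun _ =>
          isClosed_eq (continuous_apply z) continuous_const))
  · change μ z ≤ p z.1
    rw [← hμ.2.1 z.1]
    exact single_le_sum (fun y _ => hμ.1 (z.1, y)) (mem_univ z.2)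

variable [Fintype X] [Nonempty Y] {p : X → ℝ} {q : Y → ℝ} {Φ : X × Y → ℝ}

theorem exists_reducedDual_lt (hp : ∀ x, 0 ≤ p x) {v w : Y → ℝ} {ys : X → Y}
    (hys : ∀ x y, Φ (x, y) - v y = cTransform (fun x y => Φ (x, y)) v x → w y ≤ w (ys x))
    (hlt : ∑ x, p x * w (ys x) < ∑ y, q y * w y) :
    ∃ v', reducedDual p q Φ v' < reducedDual p q Φ v := by
  set u := cTransform (fun x y => Φ (x, y)) v
  have hev : ∀ᶠ t in 𝓝[>] (0 : ℝ), ∀ x,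
      cTransform (fun x y => Φ (x, y)) (v - t • w) x ≤ u x + t * w (ys x) :=
    eventually_all.2 fun x => eventually_cTransform_sub_smul_le x w (hys x)
  obtain ⟨t, ht, htpos⟩ := (hev.and self_mem_nhdsWithin).exists
  refine ⟨v - t • w, ?_⟩
  calc reducedDual p q Φ (v - t • w)
      ≤ ∑ x, p x * (u x + t * w (ys x)) + ∑ y, q y * (v - t • w) y :=
        add_le_add_left (sum_le_sum fun x _ => mul_le_mul_of_nonneg_left (ht x) (hp x)) _
    _ = reducedDual p q Φ v + t * (∑ x, p x * w (ys x) - ∑ y, q y * w y) := by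
        simp only [reducedDual, u, Pi.sub_apply, Pi.smul_apply, smul_eq_mul, mul_add, mul_sub,
          sum_add_distrib, sum_sub_distrib, mul_sum, mul_left_comm t]
        ring
    _ < reducedDual p q Φ v := by nlinarith

theorem exists_isCoupling_of_forall_reducedDual_le (hp : ∀ x, 0 ≤ p x) {v : Y → ℝ}
    (hv : ∀ v', reducedDual p q Φ v ≤ reducedDual p q Φ v') :
    ∃ μ, IsCoupling p q μ ∧
      ∀ x y, Φ (x, y) < cTransform (fun x y => Φ (x, y)) v x + v y → μ (x, y) = 0 := by
  classical
  set u := cTransform (fun x y => Φ (x, y)) v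
  suffices hq : q ∈ secondMarginal '' semiCouplings p {z | Φ z < u z.1 + v z.2} by
    obtain ⟨μ, ⟨hμ0, hμp, hμN⟩, hμq⟩ := hq
    exact ⟨μ, ⟨hμ0, hμp, congrFun hμq⟩, fun x y h => hμN (x, y) h⟩
  by_contra hq
  obtain ⟨w, hw⟩ := exists_sum_mul_lt_of_notMem ((convex_semiCouplings _ _).linear_image _)
    ((isCompact_semiCouplings _ _).image secondMarginal.continuous_of_finiteDimensional).isClosed hq
  have hmax (x : X) : ∃ y₀, Φ (x, y₀) - v y₀ = u x ∧ ∀ y, Φ (x, y) - v y = u x → w y ≤ w y₀ := by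
    obtain ⟨y₀, hy₀⟩ := exists_eq_cTransform (fun x y => Φ (x, y)) v x
    obtain ⟨y₁, hy₁, hy₁max⟩ :=
      exists_max_image {y | Φ (x, y) - v y = u x}.toFinset w ⟨y₀, by simpa⟩
    exact ⟨y₁, by simpa using hy₁, fun y hy => hy₁max y (by simpa using hy)⟩
  choose ys hys_tight hys_max using hmax
  set μ₀ : X × Y → ℝ := fun z => if z.2 = ys z.1 then p z.1 else 0
  have hμ₀ : μ₀ ∈ semiCouplings p {z | Φ z < u z.1 + v z.2} := by
    refine ⟨fun z => ?_, fun x => by simp [μ₀], fun z hz => if_neg fun hz₂ => ?_⟩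
    · dsimp only [μ₀]
      split_ifs <;> simp [hp]
    · obtain ⟨x, y⟩ := z
      obtain rfl : y = ys x := hz₂
      have hslack : Φ (x, ys x) < u x + v (ys x) := hz
      linarith [hys_tight x]
  have hpair : ∑ y, secondMarginal μ₀ y * w y = ∑ x, p x * w (ys x) := by
    simp only [secondMarginal, LinearMap.coe_mk, AddHom.coe_mk, sum_mul, μ₀, ite_mul, zero_mul]
    rw [sum_comm]
    simp
  obtain ⟨v', hv'⟩ := exists_reducedDual_lt hp hys_max (hpair ▸ hw _ ⟨μ₀, hμ₀, rfl⟩)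
  exact (hv v').not_gt hv'

end StrongDuality

theorem dual_attained_and_complementary_slackness
    {X Y : Type*} [Fintype X] [Fintype Y] [Nonempty X] [Nonempty Y]
    (p : X → ℝ) (q : Y → ℝ) (hp : ∀ x, 0 < p x) (hq : ∀ y, 0 < q y)
    (hps : ∑ x, p x = 1) (hqs : ∑ y, q y = 1) (Φ : X × Y → ℝ) :
    (∃ (u : X → ℝ) (v : Y → ℝ),
      (∀ x y, Φ (x, y) ≤ u x + v y) ∧
      IsLeast {s : ℝ | ∃ (u' : X → ℝ) (v' : Y → ℝ),
          (∀ x y, Φ (x, y) ≤ u' x + v' y) ∧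
          s = ∑ x, p x * u' x + ∑ y, q y * v' y}
        (∑ x, p x * u x + ∑ y, q y * v y)) ∧
    (∀ (u : X → ℝ) (v : Y → ℝ),
      (∀ x y, Φ (x, y) ≤ u x + v y) →
      IsLeast {s : ℝ | ∃ (u' : X → ℝ) (v' : Y → ℝ),
          (∀ x y, Φ (x, y) ≤ u' x + v' y) ∧
          s = ∑ x, p x * u' x + ∑ y, q y * v' y}
        (∑ x, p x * u x + ∑ y, q y * v y) →
      ∀ μ : X × Y → ℝ, IsCoupling p q μ →
        (IsGreatest {m : ℝ | ∃ μ' : X × Y → ℝ, IsCoupling p q μ' ∧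
              m = ∑ x, ∑ y, μ' (x, y) * Φ (x, y)}
            (∑ x, ∑ y, μ (x, y) * Φ (x, y))
          ↔ ∀ x y, Φ (x, y) < u x + v y → μ (x, y) = 0)) := by
  have hp₀ : ∀ x, 0 ≤ p x := fun x => (hp x).le
  have hfeas (v : Y → ℝ) : ∀ x y, Φ (x, y) ≤ cTransform (fun x y => Φ (x, y)) v x + v y :=
    le_cTransform_add _ v
  constructor
  · obtain ⟨v₀, hv₀⟩ :=
      exists_forall_reducedDual_le hp₀ (fun y => (hq y).le) (hps.trans hqs.symm) (Φ := Φ)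
    refine ⟨_, v₀, hfeas v₀, ⟨⟨_, v₀, hfeas v₀, rfl⟩, ?_⟩⟩
    rintro _ ⟨u', v', huv', rfl⟩
    exact (hv₀ v').trans (reducedDual_le hp₀ huv')
  intro u v huv hleast μ hμ
  have hval : reducedDual p q Φ v = ∑ x, p x * u x + ∑ y, q y * v y :=
    le_antisymm (reducedDual_le hp₀ huv) (hleast.2 ⟨_, v, hfeas v, rfl⟩)
  have hmin (v' : Y → ℝ) : reducedDual p q Φ v ≤ reducedDual p q Φ v' :=
    hval ▸ hleast.2 ⟨_, v', hfeas v', rfl⟩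
  obtain ⟨ν, hν, hνslack⟩ := exists_isCoupling_of_forall_reducedDual_le hp₀ hmin
  have hνval : ∑ x, ∑ y, ν (x, y) * Φ (x, y) = ∑ x, p x * u x + ∑ y, q y * v y :=
    hval ▸ (hν.sum_mul_eq_iff (hfeas v)).2 hνslack
  rw [← hμ.sum_mul_eq_iff huv]
  refine ⟨fun hmax => le_antisymm (hμ.sum_mul_le huv) (hνval ▸ hmax.2 ⟨ν, hν, rfl⟩), fun heq => ?_⟩
  refine ⟨⟨μ, hμ, rfl⟩, ?_⟩
  rintro _ ⟨μ', hμ', rfl⟩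
  exact heq ▸ hμ'.sum_mul_le huv
end

section
/- Let Φ : X × Y → ℝ and σ > 0. Then there exists a unique coupling π ∈ M(p,q) maximizing the function π ↦ Σ_{x,y} π(x,y) Φ(x,y) − σ I(π) over M(p,q). -/
open Finset Real

theorem exists_unique_optimal_coupling
    {X Y : Type*} [Fintype X] [Fintype Y] [Nonempty X] [Nonempty Y]
    (p : X → ℝ) (q : Y → ℝ) (hp : ∀ x, 0 < p x) (hq : ∀ y, 0 < q y)
    (hps : ∑ x, p x = 1) (hqs : ∑ y, q y = 1)
    (Φ : X × Y → ℝ) (σ : ℝ) (hσ : 0 < σ) :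
    ∃! μ : X × Y → ℝ, IsCoupling p q μ ∧
      ∀ μ' : X × Y → ℝ, IsCoupling p q μ' →
        (∑ x, ∑ y, μ' (x, y) * Φ (x, y)) - σ * mutualInfo p q μ'
          ≤ (∑ x, ∑ y, μ (x, y) * Φ (x, y)) - σ * mutualInfo p q μ := by
  classical
  set c : X × Y → ℝ := fun z => p z.1 * q z.2 with hc
  have hcpos : ∀ z, 0 < c z := fun z => mul_pos (hp _) (hq _)
  set g : ℝ → ℝ := fun t => t * Real.log t with hgdef
  set F : (X × Y → ℝ) → ℝ :=
    fun μ => (∑ z, μ z * (Φ z + σ * Real.log (c z))) - σ * ∑ z, g (μ z) with hFdef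
  -- the objective equals F (for every μ, no hypotheses needed)
  have hGF : ∀ μ : X × Y → ℝ,
      (∑ x, ∑ y, μ (x, y) * Φ (x, y)) - σ * mutualInfo p q μ = F μ := by
    intro μ
    have h1 : mutualInfo p q μ
        = ∑ z : X × Y, (g (μ z) - μ z * Real.log (c z)) := by
      rw [mutualInfo]
      rw [show (∑ x, ∑ y, μ (x, y) * Real.log (μ (x, y) / (p x * q y)))
          = ∑ z : X × Y, μ z * Real.log (μ z / (p z.1 * q z.2)) from
        (Fintype.sum_prod_type (f := fun z : X × Y =>
          μ z * Real.log (μ z / (p z.1 * q z.2)))).symm]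
      refine Finset.sum_congr rfl fun z _ => ?_
      by_cases h : μ z = 0
      · simp [hgdef, h]
      · rw [show p z.1 * q z.2 = c z from rfl,
          Real.log_div h (ne_of_gt (hcpos z))]
        simp only [hgdef]
        ring
    have h2 : (∑ x, ∑ y, μ (x, y) * Φ (x, y)) = ∑ z : X × Y, μ z * Φ z :=
      (Fintype.sum_prod_type (f := fun z : X × Y => μ z * Φ z)).symm
    have h3 : ∑ z : X × Y, μ z * (Φ z + σ * Real.log (c z))
        = (∑ z : X × Y, μ z * Φ z) + σ * ∑ z : X × Y, μ z * Real.log (c z) := by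
      rw [Finset.mul_sum, ← Finset.sum_add_distrib]
      exact Finset.sum_congr rfl fun z _ => by ring
    have h4 : σ * ∑ z : X × Y, (g (μ z) - μ z * Real.log (c z))
        = σ * ∑ z : X × Y, g (μ z) - σ * ∑ z : X × Y, μ z * Real.log (c z) := by
      rw [Finset.sum_sub_distrib, mul_sub]
    rw [h1, h2, hFdef]
    try simp only [h3, h4]
    try ring
  set K : Set (X × Y → ℝ) := {μ | IsCoupling p q μ} with hK
  -- K is closed
  have hKclosed : IsClosed K := by
    have : K = (⋂ z, {μ : X × Y → ℝ | 0 ≤ μ z}) ∩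
        ((⋂ x, {μ : X × Y → ℝ | ∑ y, μ (x, y) = p x}) ∩
         (⋂ y, {μ : X × Y → ℝ | ∑ x, μ (x, y) = q y})) := by
      ext μ
      simp only [hK, Set.mem_setOf_eq, Set.mem_inter_iff, Set.mem_iInter, IsCoupling]
      try tauto
    rw [this]
    refine IsClosed.inter (isClosed_iInter fun z =>
        isClosed_le continuous_const (continuous_apply z)) (IsClosed.inter ?_ ?_)
    · exact isClosed_iInter fun x => isClosed_eq
        (continuous_finset_sum _ fun y _ => continuous_apply (x, y)) continuous_const
    · exact isClosed_iInter fun y => isClosed_eq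
        (continuous_finset_sum _ fun x _ => continuous_apply (x, y)) continuous_const
  -- K is bounded inside [0,1]^Z
  have hKsub : K ⊆ Set.pi Set.univ (fun _ : X × Y => Set.Icc (0:ℝ) 1) := by
    intro μ hμ
    obtain ⟨hnn, hrow, _⟩ := hμ
    intro z _
    refine ⟨hnn z, ?_⟩
    calc μ z = μ (z.1, z.2) := by rfl
      _ ≤ ∑ y, μ (z.1, y) :=
        Finset.single_le_sum (fun y _ => hnn (z.1, y)) (Finset.mem_univ z.2)
      _ = p z.1 := hrow z.1
      _ ≤ ∑ x, p x := Finset.single_le_sum (fun x _ => (hp x).le) (Finset.mem_univ z.1)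
      _ = 1 := hps
  have hKcompact : IsCompact K :=
    (isCompact_univ_pi fun _ => isCompact_Icc).of_isClosed_subset hKclosed hKsub
  -- F is continuous
  have hFcont : Continuous F := by
    refine Continuous.sub ?_ (continuous_const.mul ?_)
    · exact continuous_finset_sum _ fun z _ => (continuous_apply z).mul continuous_const
    · exact continuous_finset_sum _ fun z _ =>
        Real.continuous_mul_log.comp (continuous_apply z)
  -- K is nonempty (independent coupling)
  have hμ₀ : IsCoupling p q c := by
    refine ⟨fun z => (hcpos z).le, fun x => ?_, fun y => ?_⟩
    · simp only [hc]
      rw [← Finset.mul_sum, hqs, mul_one]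
    · simp only [hc]
      rw [← Finset.sum_mul, hps, one_mul]
  -- strict concavity at midpoints
  have hmid : ∀ μ₁ μ₂ : X × Y → ℝ, IsCoupling p q μ₁ → IsCoupling p q μ₂ → μ₁ ≠ μ₂ →
      (F μ₁ + F μ₂) / 2 < F (fun z => (μ₁ z + μ₂ z) / 2) := by
    intro μ₁ μ₂ h1 h2 hne
    have hconvle : ∀ a b : ℝ, 0 ≤ a → 0 ≤ b → g ((a + b) / 2) ≤ (g a + g b) / 2 := by
      intro a b ha hb
      have := Real.strictConvexOn_mul_log.convexOn.2 (Set.mem_Ici.2 ha) (Set.mem_Ici.2 hb)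
        (by norm_num : (0:ℝ) ≤ 1/2) (by norm_num : (0:ℝ) ≤ 1/2) (by norm_num)
      simp only [smul_eq_mul, hgdef] at this ⊢
      calc (a + b) / 2 * Real.log ((a + b) / 2)
          = (1/2 * a + 1/2 * b) * Real.log (1/2 * a + 1/2 * b) := by ring_nf
        _ ≤ 1/2 * (a * Real.log a) + 1/2 * (b * Real.log b) := this
        _ = (a * Real.log a + b * Real.log b) / 2 := by ring
    have hconvlt : ∀ a b : ℝ, 0 ≤ a → 0 ≤ b → a ≠ b →
        g ((a + b) / 2) < (g a + g b) / 2 := by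
      intro a b ha hb hab
      have := Real.strictConvexOn_mul_log.2 (Set.mem_Ici.2 ha) (Set.mem_Ici.2 hb) hab
        (by norm_num : (0:ℝ) < 1/2) (by norm_num : (0:ℝ) < 1/2) (by norm_num)
      simp only [smul_eq_mul, hgdef] at this ⊢
      calc (a + b) / 2 * Real.log ((a + b) / 2)
          = (1/2 * a + 1/2 * b) * Real.log (1/2 * a + 1/2 * b) := by ring_nf
        _ < 1/2 * (a * Real.log a) + 1/2 * (b * Real.log b) := this
        _ = (a * Real.log a + b * Real.log b) / 2 := by ring
    obtain ⟨z₀, hz₀⟩ : ∃ z, μ₁ z ≠ μ₂ z := by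
      by_contra h
      push_neg at h
      exact hne (funext h)
    have hsum : ∑ z : X × Y, g ((μ₁ z + μ₂ z) / 2)
        < ∑ z : X × Y, (g (μ₁ z) + g (μ₂ z)) / 2 := by
      refine Finset.sum_lt_sum (fun z _ => hconvle _ _ (h1.1 z) (h2.1 z)) ?_
      exact ⟨z₀, Finset.mem_univ _, hconvlt _ _ (h1.1 z₀) (h2.1 z₀) hz₀⟩
    have hlin : ∑ z : X × Y, (μ₁ z + μ₂ z) / 2 * (Φ z + σ * Real.log (c z))
        = ((∑ z : X × Y, μ₁ z * (Φ z + σ * Real.log (c z)))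
          + ∑ z : X × Y, μ₂ z * (Φ z + σ * Real.log (c z))) / 2 := by
      rw [← Finset.sum_add_distrib, Finset.sum_div]
      exact Finset.sum_congr rfl fun z _ => by ring
    have hsum2 : ∑ z : X × Y, (g (μ₁ z) + g (μ₂ z)) / 2
        = ((∑ z : X × Y, g (μ₁ z)) + ∑ z : X × Y, g (μ₂ z)) / 2 := by
      rw [← Finset.sum_add_distrib, Finset.sum_div]
    have hmul : σ * ∑ z : X × Y, g ((μ₁ z + μ₂ z) / 2)
        < σ * (((∑ z : X × Y, g (μ₁ z)) + ∑ z : X × Y, g (μ₂ z)) / 2) := by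
      rw [← hsum2]
      exact (mul_lt_mul_iff_right₀ hσ).2 hsum
    simp only [hFdef]
    rw [hlin]
    linarith
  -- midpoint of couplings is a coupling
  have hmidcoupling : ∀ μ₁ μ₂ : X × Y → ℝ, IsCoupling p q μ₁ → IsCoupling p q μ₂ →
      IsCoupling p q (fun z => (μ₁ z + μ₂ z) / 2) := by
    intro μ₁ μ₂ h1 h2
    refine ⟨fun z => div_nonneg (add_nonneg (h1.1 z) (h2.1 z)) (by norm_num),
      fun x => ?_, fun y => ?_⟩
    · rw [← Finset.sum_div, Finset.sum_add_distrib, h1.2.1, h2.2.1]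
      ring
    · rw [← Finset.sum_div, Finset.sum_add_distrib, h1.2.2, h2.2.2]
      ring
  obtain ⟨μ, hμK, hμmax⟩ := hKcompact.exists_isMaxOn ⟨c, hμ₀⟩ hFcont.continuousOn
  have hμC : IsCoupling p q μ := hμK
  refine ⟨μ, ⟨hμC, fun μ' hμ' => ?_⟩, ?_⟩
  · rw [hGF, hGF]
    exact hμmax hμ'
  · rintro μ' ⟨hμ'C, hμ'max⟩
    by_contra hne
    have h1 : F μ' ≤ F μ := hμmax hμ'C
    have h2 : F μ ≤ F μ' := by
      have := hμ'max μ hμC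
      rwa [hGF, hGF] at this
    have h3 := hmid μ μ' hμC hμ'C (fun h => hne (h ▸ rfl))
    have h4 : F (fun z => (μ z + μ' z) / 2) ≤ F μ :=
      hμmax (hmidcoupling μ μ' hμC hμ'C)
    have h5 : (F μ + F μ') / 2 < F μ := lt_of_lt_of_le h3 h4
    have h6 : F μ < F μ := by
      clear_value F
      linarith [h2, h5]
    exact lt_irrefl _ h6
end

section
/- Let Φ : X × Y → ℝ and σ > 0. There exist unique functions u : X → ℝ, v : Y → ℝ and a unique constant c ∈ ℝ satisfying the normalizations Σ_x p(x) u(x) = 0 and Σ_y q(y) v(y) = 0, such that the function π defined by π(x,y) = p(x) q(y) exp((Φ(x,y) − u(x) − v(y) − c)/σ) belongs to M(p,q). -/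
/-!
Existence is variational. The semi-dual
`F u = ∑ x, p x * u x + ∑ y, q y * σ * log (∑ x, p x * exp ((Φ (x, y) - u x) / σ))`
is invariant under adding a constant to `u`, and bounding each log-sum-exp below by a single
term makes it coercive on the hyperplane `∑ x, p x * u x = 0`, so it has a global minimiser.
Taking `v` to be the soft c-transform of `u` makes the column sums equal `q` for every `u`;
the vanishing of the derivative of `F` along coordinate directions at the minimiser says that
the row sums equal `p`.

Uniqueness: two solutions give densities with `π' = π * exp g`, where `g (x, y) = a x + b y`.
Since `π` and `π'` have the same marginals, `∑ (π' - π) * g = 0`, while every term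
`π * (exp g - 1) * g` is nonnegative; hence `g = 0`, and the normalizations fix `u`, `v`, `c`.
-/

open Finset Real

theorem Real.exp_sub_one_mul_self_pos {t : ℝ} (ht : t ≠ 0) : 0 < (exp t - 1) * t := by
  rcases ht.lt_or_gt with h | h
  · exact mul_pos_of_neg_of_neg (by linarith [exp_lt_one_iff.mpr h]) h
  · exact mul_pos (by linarith [one_lt_exp_iff.mpr h]) h

theorem Real.exp_sub_one_mul_self_nonneg (t : ℝ) : 0 ≤ (exp t - 1) * t := by
  rcases eq_or_ne t 0 with rfl | ht
  · simp
  · exact (exp_sub_one_mul_self_pos ht).le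

theorem eq_zero_of_sum_mul_exp_sub_mul_eq_zero {ι : Type*} [Fintype ι] {ν g : ι → ℝ}
    (hν : ∀ i, 0 < ν i) (h : ∑ i, (ν i * exp (g i) - ν i) * g i = 0) (i : ι) : g i = 0 := by
  have hterm : ∀ j, (ν j * exp (g j) - ν j) * g j = ν j * ((exp (g j) - 1) * g j) :=
    fun j => by ring
  simp only [hterm] at h
  have hnonneg : ∀ j ∈ univ, 0 ≤ ν j * ((exp (g j) - 1) * g j) :=
    fun j _ => mul_nonneg (hν j).le (exp_sub_one_mul_self_nonneg _)
  by_contra hi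
  have := (sum_eq_zero_iff_of_nonneg hnonneg).mp h i (mem_univ i)
  exact (mul_pos (hν i) (exp_sub_one_mul_self_pos hi)).ne' this

theorem le_sub_div_of_sum_mul_eq_zero {ι : Type*} [Fintype ι] {p u α : ι → ℝ}
    (hp : ∀ i, 0 < p i) (hu : ∑ i, p i * u i = 0) (hα : ∀ i, α i ≤ u i) (i : ι) :
    u i ≤ α i - (∑ j, p j * α j) / p i := by
  have : p i * (u i - α i) ≤ -∑ j, p j * α j := calc
    p i * (u i - α i) ≤ ∑ j, p j * (u j - α j) :=
      single_le_sum (f := fun j => p j * (u j - α j))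
        (fun j _ => mul_nonneg (hp j).le (sub_nonneg.mpr (hα j))) (mem_univ i)
    _ = -∑ j, p j * α j := by simp only [mul_sub, sum_sub_distrib, hu, zero_sub]
  rw [le_sub_comm, div_le_iff₀ (hp i)]
  linarith

section
variable {X Y : Type*} [Fintype X] [Fintype Y] {p : X → ℝ} {q : Y → ℝ}

theorem IsCoupling.sum_mul_add_s6 {μ : X × Y → ℝ} (hμ : IsCoupling p q μ) (a : X → ℝ) (b : Y → ℝ) :
    ∑ z, μ z * (a z.1 + b z.2) = ∑ x, p x * a x + ∑ y, q y * b y := by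
  simp only [mul_add, sum_add_distrib]
  rw [Fintype.sum_prod_type, Fintype.sum_prod_type_right]
  simp only [← sum_mul, hμ.2.1, hμ.2.2]

theorem IsCoupling.sum_sub_mul_add_eq_zero {μ ν : X × Y → ℝ} (hμ : IsCoupling p q μ)
    (hν : IsCoupling p q ν) (a : X → ℝ) (b : Y → ℝ) :
    ∑ z, (μ z - ν z) * (a z.1 + b z.2) = 0 := by
  simp only [sub_mul, sum_sub_distrib, hμ.sum_mul_add_s6, hν.sum_mul_add_s6, sub_self]

theorem eq_zero_of_forall_add_add_eq_zero (hps : ∑ x, p x = 1) (hqs : ∑ y, q y = 1)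
    {a : X → ℝ} {b : Y → ℝ} {k : ℝ} (ha : ∑ x, p x * a x = 0) (hb : ∑ y, q y * b y = 0)
    (h : ∀ x y, a x + b y + k = 0) : a = 0 ∧ b = 0 ∧ k = 0 := by
  have hak : ∀ x, a x + k = 0 := fun x => calc
    a x + k = ∑ y, q y * (a x + b y + k) := by
      simp only [mul_add, sum_add_distrib, ← sum_mul, hqs, hb]; ring
    _ = 0 := by simp [h x]
  have hbk : ∀ y, b y + k = 0 := fun y => calc
    b y + k = ∑ x, p x * (a x + b y + k) := by
      simp only [mul_add, sum_add_distrib, ← sum_mul, hps, ha]; ring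
    _ = 0 := by simp [h _ y]
  have hk : k = 0 := calc
    k = ∑ x, p x * (a x + k) := by
      simp only [mul_add, sum_add_distrib, ← sum_mul, hps, ha]; ring
    _ = 0 := by simp [hak]
  exact ⟨funext fun x => by simpa [hk] using hak x, funext fun y => by simpa [hk] using hbk y, hk⟩
end

section
variable {X Y : Type*} {p : X → ℝ} {q : Y → ℝ} {Φ : X × Y → ℝ} {σ : ℝ}

variable (p q Φ σ) in
noncomputable def gibbsDensity (u : X → ℝ) (v : Y → ℝ) (c : ℝ) (z : X × Y) : ℝ :=
  p z.1 * q z.2 * exp ((Φ z - u z.1 - v z.2 - c) / σ)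

theorem gibbsDensity_pos (hp : ∀ x, 0 < p x) (hq : ∀ y, 0 < q y) (u : X → ℝ) (v : Y → ℝ)
    (c : ℝ) (z : X × Y) : 0 < gibbsDensity p q Φ σ u v c z :=
  mul_pos (mul_pos (hp z.1) (hq z.2)) (exp_pos _)

theorem gibbsDensity_eq_mul_exp (hσ : σ ≠ 0) (u u' : X → ℝ) (v v' : Y → ℝ) (c c' : ℝ)
    (z : X × Y) :
    gibbsDensity p q Φ σ u' v' c' z =
      gibbsDensity p q Φ σ u v c z *
        exp ((u z.1 - u' z.1 + (c - c')) / σ + (v z.2 - v' z.2) / σ) := by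
  simp only [gibbsDensity, mul_assoc, ← exp_add]
  congr 3
  field_simp
  ring

variable [Fintype X] [Fintype Y]

theorem gibbsDensity_unique (hp : ∀ x, 0 < p x) (hq : ∀ y, 0 < q y) (hps : ∑ x, p x = 1)
    (hqs : ∑ y, q y = 1) (hσ : σ ≠ 0) {u u' : X → ℝ} {v v' : Y → ℝ} {c c' : ℝ}
    (hu : ∑ x, p x * u x = 0) (hu' : ∑ x, p x * u' x = 0)
    (hv : ∑ y, q y * v y = 0) (hv' : ∑ y, q y * v' y = 0)
    (h : IsCoupling p q (gibbsDensity p q Φ σ u v c))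
    (h' : IsCoupling p q (gibbsDensity p q Φ σ u' v' c')) : (u', v', c') = (u, v, c) := by
  set a : X → ℝ := fun x => (u x - u' x + (c - c')) / σ
  set b : Y → ℝ := fun y => (v y - v' y) / σ
  have hab : ∀ z : X × Y, a z.1 + b z.2 = 0 := by
    refine eq_zero_of_sum_mul_exp_sub_mul_eq_zero
      (gibbsDensity_pos (Φ := Φ) (σ := σ) hp hq u v c) ?_
    simpa only [gibbsDensity_eq_mul_exp hσ u u' v v' c c'] using
      h'.sum_sub_mul_add_eq_zero h a b
  obtain ⟨hu, hv, hc⟩ := eq_zero_of_forall_add_add_eq_zero (k := c - c') hps hqs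
    (a := u - u') (b := v - v') (by simp [mul_sub, sum_sub_distrib, hu, hu'])
    (by simp [mul_sub, sum_sub_distrib, hv, hv'])
    (fun x y => by
      have := hab (x, y)
      simp only [a, b] at this
      field_simp at this
      simp only [Pi.sub_apply]
      linarith)
  rw [sub_eq_zero] at hu hv hc
  rw [hu, hv, hc]
end

section SemiDual
variable {X Y : Type*} [Fintype X] {p : X → ℝ} {q : Y → ℝ} {Φ : X × Y → ℝ} {σ : ℝ}

variable (p Φ σ) in
noncomputable def partitionFn (u : X → ℝ) (y : Y) : ℝ :=
  ∑ x, p x * exp ((Φ (x, y) - u x) / σ)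

variable (p Φ σ) in
noncomputable def softCTransform (u : X → ℝ) (y : Y) : ℝ :=
  σ * log (partitionFn p Φ σ u y)

theorem partitionFn_pos [Nonempty X] (hp : ∀ x, 0 < p x) (u : X → ℝ) (y : Y) :
    0 < partitionFn p Φ σ u y :=
  sum_pos (fun x _ => mul_pos (hp x) (exp_pos _)) univ_nonempty

theorem partitionFn_add_const (u : X → ℝ) (t : ℝ) (y : Y) :
    partitionFn p Φ σ (fun x => u x + t) y = partitionFn p Φ σ u y * exp (-t / σ) := by
  simp only [partitionFn, sum_mul, mul_assoc, ← exp_add]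
  congr! 3
  ring

theorem softCTransform_add_const [Nonempty X] (hp : ∀ x, 0 < p x) (hσ : σ ≠ 0) (u : X → ℝ)
    (t : ℝ) (y : Y) :
    softCTransform p Φ σ (fun x => u x + t) y = softCTransform p Φ σ u y - t := by
  rw [softCTransform, softCTransform, partitionFn_add_const,
    log_mul (partitionFn_pos hp u y).ne' (exp_pos _).ne', log_exp]
  field_simp
  ring

theorem gibbsDensity_softCTransform [Nonempty X] (hp : ∀ x, 0 < p x) (hσ : σ ≠ 0)
    (u : X → ℝ) (x : X) (y : Y) :
    gibbsDensity p q Φ σ u (softCTransform p Φ σ u) 0 (x, y) =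
      q y * (p x * exp ((Φ (x, y) - u x) / σ) / partitionFn p Φ σ u y) := by
  have hsplit : (Φ (x, y) - u x - softCTransform p Φ σ u y - 0) / σ =
      (Φ (x, y) - u x) / σ - log (partitionFn p Φ σ u y) := by
    rw [softCTransform]; field_simp; ring
  rw [gibbsDensity, hsplit, exp_sub, exp_log (partitionFn_pos hp u y)]
  ring

theorem hasDerivAt_partitionFn_add_smul (u e : X → ℝ) (y : Y) :
    HasDerivAt (fun s : ℝ => partitionFn p Φ σ (u + s • e) y)
      (-(∑ x, e x * (p x * exp ((Φ (x, y) - u x) / σ))) / σ) 0 := by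
  have hterm : ∀ x, HasDerivAt (fun s : ℝ => p x * exp ((Φ (x, y) - (u + s • e) x) / σ))
      (p x * (exp ((Φ (x, y) - u x) / σ) * (-e x / σ))) 0 := fun x => by
    have hlin : HasDerivAt (fun s : ℝ => (Φ (x, y) - (u x + s * e x)) / σ) (-e x / σ) 0 := by
      simpa using (((hasDerivAt_id (0 : ℝ)).mul_const (e x)).const_add (u x)
        |>.const_sub (Φ (x, y))).div_const σ
    simpa using hlin.exp.const_mul (p x)
  refine (HasDerivAt.fun_sum fun x (_ : x ∈ univ) => hterm x).congr_deriv ?_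
  rw [neg_div, sum_div, ← sum_neg_distrib]
  exact sum_congr rfl fun x _ => by ring

theorem gibbsDensity_softCTransform_col_sum [Nonempty X] (hp : ∀ x, 0 < p x) (hσ : σ ≠ 0)
    (u : X → ℝ) (y : Y) :
    ∑ x, gibbsDensity p q Φ σ u (softCTransform p Φ σ u) 0 (x, y) = q y := by
  simp only [gibbsDensity_softCTransform hp hσ, ← mul_sum, ← sum_div]
  change q y * (partitionFn p Φ σ u y / partitionFn p Φ σ u y) = q y
  rw [div_self (partitionFn_pos hp u y).ne', mul_one]

variable [Fintype Y]

variable (p q Φ σ) in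
noncomputable def semiDual (u : X → ℝ) : ℝ :=
  ∑ x, p x * u x + ∑ y, q y * softCTransform p Φ σ u y

theorem semiDual_add_const [Nonempty X] (hp : ∀ x, 0 < p x) (hps : ∑ x, p x = 1)
    (hqs : ∑ y, q y = 1) (hσ : σ ≠ 0) (u : X → ℝ) (t : ℝ) :
    semiDual p q Φ σ (fun x => u x + t) = semiDual p q Φ σ u := by
  simp only [semiDual, softCTransform_add_const hp hσ, mul_add, mul_sub, sum_add_distrib,
    sum_sub_distrib, ← sum_mul, hps, hqs]
  ring

theorem continuous_semiDual [Nonempty X] (hp : ∀ x, 0 < p x) : Continuous (semiDual p q Φ σ) := by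
  have hZ : ∀ y, Continuous fun u : X → ℝ => partitionFn p Φ σ u y := fun y => by
    unfold partitionFn; fun_prop
  unfold semiDual softCTransform
  have := fun y => (hZ y).log fun u => (partitionFn_pos hp u y).ne'
  fun_prop

theorem le_semiDual (hp : ∀ x, 0 < p x) (hq : ∀ y, 0 < q y) (hqs : ∑ y, q y = 1) (hσ : 0 < σ)
    (u : X → ℝ) (x : X) :
    σ * log (p x) + ∑ y, q y * Φ (x, y) + ∑ x', p x' * u x' - u x ≤ semiDual p q Φ σ u := by
  have key : ∀ y, σ * log (p x) + (Φ (x, y) - u x) ≤ softCTransform p Φ σ u y := fun y => by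
    have hterm : p x * exp ((Φ (x, y) - u x) / σ) ≤ partitionFn p Φ σ u y :=
      single_le_sum (f := fun x' => p x' * exp ((Φ (x', y) - u x') / σ))
        (fun x' _ => (mul_pos (hp x') (exp_pos _)).le) (mem_univ x)
    have hlog := log_le_log (mul_pos (hp x) (exp_pos _)) hterm
    rw [log_mul (hp x).ne' (exp_pos _).ne', log_exp] at hlog
    have := mul_le_mul_of_nonneg_left hlog hσ.le
    rwa [mul_add, mul_div_cancel₀ _ hσ.ne'] at this
  have hsum := sum_le_sum fun y (_ : y ∈ univ) => mul_le_mul_of_nonneg_left (key y) (hq y).le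
  simp only [mul_add, mul_sub, sum_add_distrib, sum_sub_distrib, ← sum_mul, hqs, one_mul] at hsum
  unfold semiDual
  linarith

theorem exists_centered_isMin_semiDual [Nonempty X] (hp : ∀ x, 0 < p x) (hq : ∀ y, 0 < q y)
    (hps : ∑ x, p x = 1) (hqs : ∑ y, q y = 1) (hσ : 0 < σ) :
    ∃ u, ∑ x, p x * u x = 0 ∧ ∀ w, semiDual p q Φ σ u ≤ semiDual p q Φ σ w := by
  set K := {u : X → ℝ | ∑ x, p x * u x = 0 ∧ semiDual p q Φ σ u ≤ semiDual p q Φ σ 0}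
  set α : X → ℝ := fun x => σ * log (p x) + ∑ y, q y * Φ (x, y) - semiDual p q Φ σ 0
  have hα : ∀ u ∈ K, ∀ x, α x ≤ u x := fun u ⟨hu0, hu⟩ x => by
    have := le_semiDual (Φ := Φ) hp hq hqs hσ u x
    rw [hu0] at this
    simp only [α]
    linarith
  have hKbox : K ⊆ Set.univ.pi fun x => Set.Icc (α x) (α x - (∑ j, p j * α j) / p x) :=
    fun u hu x _ => ⟨hα u hu x, le_sub_div_of_sum_mul_eq_zero hp hu.1 (hα u hu) x⟩
  have hKclosed : IsClosed K :=
    (isClosed_eq (by fun_prop) continuous_const).inter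
      (isClosed_le (continuous_semiDual hp) continuous_const)
  have hK : IsCompact K :=
    (isCompact_univ_pi fun x => isCompact_Icc).of_isClosed_subset hKclosed hKbox
  obtain ⟨u, ⟨hu0, -⟩, hmin⟩ :=
    hK.exists_isMinOn ⟨0, by simp [K]⟩
      (continuous_semiDual (q := q) (Φ := Φ) (σ := σ) hp).continuousOn
  refine ⟨u, hu0, fun w => ?_⟩
  set w₀ := fun x => w x + -∑ x', p x' * w x'
  have hw₀ : ∑ x, p x * w₀ x = 0 := by
    simp only [w₀, mul_add, sum_add_distrib, ← sum_mul, hps, one_mul, add_neg_cancel]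
  rw [← semiDual_add_const hp hps hqs hσ.ne' w (-∑ x', p x' * w x')]
  by_cases hw : semiDual p q Φ σ w₀ ≤ semiDual p q Φ σ 0
  · exact hmin ⟨hw₀, hw⟩
  · exact (hmin ⟨by simp, le_rfl⟩).trans (le_of_not_ge hw)

theorem hasDerivAt_semiDual_add_smul [Nonempty X] (hp : ∀ x, 0 < p x) (hσ : σ ≠ 0)
    (u e : X → ℝ) :
    HasDerivAt (fun s : ℝ => semiDual p q Φ σ (u + s • e))
      (∑ x, e x * (p x - ∑ y, gibbsDensity p q Φ σ u (softCTransform p Φ σ u) 0 (x, y))) 0 := by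
  have hlin : HasDerivAt (fun s : ℝ => ∑ x, p x * (u + s • e) x) (∑ x, p x * e x) 0 :=
    HasDerivAt.fun_sum fun x _ => by
      simpa using (((hasDerivAt_id (0 : ℝ)).mul_const (e x)).const_add (u x)).const_mul (p x)
  have hsoft : ∀ y, HasDerivAt (fun s : ℝ => softCTransform p Φ σ (u + s • e) y)
      (σ * ((-(∑ x, e x * (p x * exp ((Φ (x, y) - u x) / σ))) / σ) / partitionFn p Φ σ u y)) 0 :=
    fun y => by
      have hlog := (hasDerivAt_partitionFn_add_smul (p := p) (Φ := Φ) (σ := σ) u e y).log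
        (by simpa using (partitionFn_pos (Φ := Φ) (σ := σ) hp u y).ne')
      rw [zero_smul, add_zero] at hlog
      exact hlog.const_mul σ
  refine (hlin.add (HasDerivAt.fun_sum fun y (_ : y ∈ univ) =>
    (hsoft y).const_mul (q y))).congr_deriv ?_
  simp only [gibbsDensity_softCTransform hp hσ, mul_sub, sum_sub_distrib, mul_sum]
  simp only [neg_div, mul_neg, sum_div, mul_sum, sum_neg_distrib, ← sub_eq_add_neg]
  rw [sum_comm]
  congr 1
  · exact sum_congr rfl fun x _ => mul_comm _ _
  · refine sum_congr rfl fun x _ => sum_congr rfl fun y _ => ?_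
    field_simp

theorem gibbsDensity_softCTransform_row_sum_of_isMin [Nonempty X] (hp : ∀ x, 0 < p x)
    (hσ : σ ≠ 0) {u : X → ℝ} (hmin : ∀ w, semiDual p q Φ σ u ≤ semiDual p q Φ σ w) (x : X) :
    ∑ y, gibbsDensity p q Φ σ u (softCTransform p Φ σ u) 0 (x, y) = p x := by
  classical
  have hloc : IsLocalMin (fun s : ℝ => semiDual p q Φ σ (u + s • Pi.single x 1)) 0 :=
    Filter.Eventually.of_forall fun s => by simpa using hmin _
  have := hloc.hasDerivAt_eq_zero (hasDerivAt_semiDual_add_smul hp hσ u (Pi.single x 1))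
  simp only [Pi.single_apply, ite_mul, one_mul, zero_mul, sum_ite_eq', mem_univ, if_true] at this
  linarith

theorem exists_isCoupling_gibbsDensity [Nonempty X] (hp : ∀ x, 0 < p x) (hq : ∀ y, 0 < q y)
    (hps : ∑ x, p x = 1) (hqs : ∑ y, q y = 1) (hσ : 0 < σ) :
    ∃ (u : X → ℝ) (v : Y → ℝ) (c : ℝ), ∑ x, p x * u x = 0 ∧ ∑ y, q y * v y = 0 ∧
      IsCoupling p q (gibbsDensity p q Φ σ u v c) := by
  obtain ⟨u, hu, hmin⟩ := exists_centered_isMin_semiDual (Φ := Φ) hp hq hps hqs hσ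
  set c := ∑ y, q y * softCTransform p Φ σ u y
  have hshift : gibbsDensity p q Φ σ u (fun y => softCTransform p Φ σ u y - c) c =
      gibbsDensity p q Φ σ u (softCTransform p Φ σ u) 0 := by
    funext z; simp only [gibbsDensity, sub_zero]; ring_nf
  refine ⟨u, fun y => softCTransform p Φ σ u y - c, c, hu,
    by simp only [mul_sub, sum_sub_distrib, ← sum_mul, hqs, one_mul, c, sub_self], ?_⟩
  rw [hshift]
  exact ⟨fun z => (gibbsDensity_pos hp hq _ _ _ z).le,
    gibbsDensity_softCTransform_row_sum_of_isMin hp hσ.ne' hmin,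
    gibbsDensity_softCTransform_col_sum hp hσ.ne' u⟩

end SemiDual

theorem schrodinger_system_exists_unique_general
    {X Y : Type*} [Fintype X] [Fintype Y] [Nonempty X]
    (p : X → ℝ) (q : Y → ℝ) (hp : ∀ x, 0 < p x) (hq : ∀ y, 0 < q y)
    (hps : ∑ x, p x = 1) (hqs : ∑ y, q y = 1)
    (Φ : X × Y → ℝ) (σ : ℝ) (hσ : 0 < σ) :
    ∃! uvc : (X → ℝ) × (Y → ℝ) × ℝ,
      (∑ x, p x * uvc.1 x = 0) ∧ (∑ y, q y * uvc.2.1 y = 0) ∧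
      IsCoupling p q (fun z =>
        p z.1 * q z.2 * Real.exp ((Φ z - uvc.1 z.1 - uvc.2.1 z.2 - uvc.2.2) / σ)) := by
  obtain ⟨u, v, c, hu, hv, hπ⟩ := exists_isCoupling_gibbsDensity (Φ := Φ) hp hq hps hqs hσ
  refine ⟨(u, v, c), ⟨hu, hv, hπ⟩, ?_⟩
  rintro ⟨u', v', c'⟩ ⟨hu', hv', hπ'⟩
  exact gibbsDensity_unique hp hq hps hqs hσ.ne' hu hu' hv hv' hπ hπ'

theorem schrodinger_system_exists_unique
    {X Y : Type*} [Fintype X] [Fintype Y] [Nonempty X] [Nonempty Y]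
    (p : X → ℝ) (q : Y → ℝ) (hp : ∀ x, 0 < p x) (hq : ∀ y, 0 < q y)
    (hps : ∑ x, p x = 1) (hqs : ∑ y, q y = 1)
    (Φ : X × Y → ℝ) (σ : ℝ) (hσ : 0 < σ) :
    ∃! uvc : (X → ℝ) × (Y → ℝ) × ℝ,
      (∑ x, p x * uvc.1 x = 0) ∧ (∑ y, q y * uvc.2.1 y = 0) ∧
      IsCoupling p q (fun z =>
        p z.1 * q z.2 * Real.exp ((Φ z - uvc.1 z.1 - uvc.2.1 z.2 - uvc.2.2) / σ)) :=
  schrodinger_system_exists_unique_general p q hp hq hps hqs Φ σ hσ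
end

section
/- Let Φ : X × Y → ℝ and σ > 0. Suppose u : X → ℝ, v : Y → ℝ and c ∈ ℝ satisfy Σ_x p(x) u(x) = 0, Σ_y q(y) v(y) = 0, and the function π(x,y) = p(x) q(y) exp((Φ(x,y) − u(x) − v(y) − c)/σ) belongs to M(p,q). Then π is the unique maximizer of π' ↦ Σ_{x,y} π'(x,y) Φ(x,y) − σ I(π') over M(p,q), and c equals the maximal value: c = max_{π' ∈ M(p,q)} [Σ_{x,y} π'(x,y) Φ(x,y) − σ I(π')]. -/
open Finset Real

/-! For a coupling `μ'`, the objective `∑ μ' Φ - σ I(μ')` equals `c - σ KL(μ' ‖ μ)`, where `μ` is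
the Gibbs coupling: the potentials `u`, `v`, `c` integrate against `μ'` to `c` because they only
see its marginals. Gibbs' inequality `KL ≥ 0`, with equality only at `μ' = μ`, finishes the proof. -/

open InformationTheory

noncomputable def relEntropy {Z : Type*} [Fintype Z] (w m : Z → ℝ) : ℝ :=
  ∑ z, w z * log (w z / m z)

section RelEntropy

variable {Z : Type*} [Fintype Z] {w m : Z → ℝ}

lemma relEntropy_self (m : Z → ℝ) : relEntropy m m = 0 := by
  refine sum_eq_zero fun z _ => ?_
  rcases eq_or_ne (m z) 0 with h | h
  · simp [h]
  · simp [div_self h]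

lemma relEntropy_eq_sum_mul_klFun (hm : ∀ z, m z ≠ 0) (hs : ∑ z, w z = ∑ z, m z) :
    relEntropy w m = ∑ z, m z * klFun (w z / m z) := by
  have hterm : ∀ z, m z * klFun (w z / m z) = w z * log (w z / m z) + (m z - w z) := by
    intro z
    rw [klFun_apply]
    field_simp [hm z]
    ring
  simp only [hterm, sum_add_distrib, sum_sub_distrib, hs, sub_self, add_zero, relEntropy]

lemma relEntropy_nonneg (hw : ∀ z, 0 ≤ w z) (hm : ∀ z, 0 < m z) (hs : ∑ z, w z = ∑ z, m z) :
    0 ≤ relEntropy w m := by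
  rw [relEntropy_eq_sum_mul_klFun (fun z => (hm z).ne') hs]
  exact sum_nonneg fun z _ => mul_nonneg (hm z).le (klFun_nonneg (div_nonneg (hw z) (hm z).le))

lemma relEntropy_eq_zero_iff (hw : ∀ z, 0 ≤ w z) (hm : ∀ z, 0 < m z)
    (hs : ∑ z, w z = ∑ z, m z) : relEntropy w m = 0 ↔ w = m := by
  refine ⟨fun h => ?_, fun h => h ▸ relEntropy_self m⟩
  have hterm_nonneg : ∀ z ∈ univ, 0 ≤ m z * klFun (w z / m z) :=
    fun z _ => mul_nonneg (hm z).le (klFun_nonneg (div_nonneg (hw z) (hm z).le))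
  rw [relEntropy_eq_sum_mul_klFun (fun z => (hm z).ne') hs,
    sum_eq_zero_iff_of_nonneg hterm_nonneg] at h
  funext z
  have hkl : klFun (w z / m z) = 0 := (mul_eq_zero.mp (h z (mem_univ z))).resolve_left (hm z).ne'
  rwa [klFun_eq_zero_iff (div_nonneg (hw z) (hm z).le), div_eq_one_iff_eq (hm z).ne'] at hkl

end RelEntropy

lemma mul_log_div_eq_mul_log_div_add (a : ℝ) {b m : ℝ} (hb : b ≠ 0) (hm : m ≠ 0) :
    a * log (a / b) = a * log (a / m) + a * log (m / b) := by
  rcases eq_or_ne a 0 with rfl | ha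
  · simp
  · rw [← mul_add, ← log_mul (div_ne_zero ha hm) (div_ne_zero hm hb), div_mul_div_cancel₀ hm]

section Coupling

variable {X Y : Type*} [Fintype X] [Fintype Y] {p : X → ℝ} {q : Y → ℝ} {μ μ' : X × Y → ℝ}

lemma mutualInfo_eq_relEntropy_add (hpq : ∀ x y, p x * q y ≠ 0) (hμ : ∀ z, μ z ≠ 0) :
    mutualInfo p q μ' =
      relEntropy μ' μ + ∑ x, ∑ y, μ' (x, y) * log (μ (x, y) / (p x * q y)) := by
  simp only [mutualInfo, relEntropy, Fintype.sum_prod_type, ← sum_add_distrib]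
  exact sum_congr rfl fun x _ => sum_congr rfl fun y _ =>
    mul_log_div_eq_mul_log_div_add _ (hpq x y) (hμ (x, y))

lemma IsCoupling.sum_eq (h : IsCoupling p q μ) : ∑ z, μ z = ∑ x, p x := by
  rw [Fintype.sum_prod_type]
  exact sum_congr rfl fun x _ => h.2.1 x

lemma IsCoupling.sum_sum_mul_add (h : IsCoupling p q μ) (f : X → ℝ) (g : Y → ℝ) :
    ∑ x, ∑ y, μ (x, y) * (f x + g y) = ∑ x, p x * f x + ∑ y, q y * g y := by
  simp only [mul_add, sum_add_distrib]
  rw [sum_comm (f := fun x y => μ (x, y) * g y)]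
  simp only [← sum_mul, h.2.1, h.2.2]

lemma IsCoupling.sum_mul_sub_mutualInfo_eq {Φ : X × Y → ℝ} {σ : ℝ} {u : X → ℝ} {v : Y → ℝ}
    {c : ℝ} (hp : ∀ x, 0 < p x) (hq : ∀ y, 0 < q y) (hps : ∑ x, p x = 1) (hσ : σ ≠ 0)
    (hu : ∑ x, p x * u x = 0) (hv : ∑ y, q y * v y = 0)
    (hμdef : ∀ x y, μ (x, y) = p x * q y * exp ((Φ (x, y) - u x - v y - c) / σ))
    (hμ' : IsCoupling p q μ') :
    (∑ x, ∑ y, μ' (x, y) * Φ (x, y)) - σ * mutualInfo p q μ' = c - σ * relEntropy μ' μ := by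
  have hpq : ∀ x y, p x * q y ≠ 0 := fun x y => (mul_pos (hp x) (hq y)).ne'
  have hμ : ∀ z, μ z ≠ 0 := fun ⟨x, y⟩ => by rw [hμdef]; exact mul_ne_zero (hpq x y) (exp_ne_zero _)
  have hlog : ∀ x y, σ * log (μ (x, y) / (p x * q y)) = Φ (x, y) - ((u x + c) + v y) := by
    intro x y
    rw [hμdef, mul_div_cancel_left₀ _ (hpq x y), log_exp]
    field_simp
    ring
  have hpotential : ∑ x, ∑ y, μ' (x, y) * ((u x + c) + v y) = c := by
    rw [hμ'.sum_sum_mul_add, hv]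
    simp only [mul_add, sum_add_distrib, hu, ← sum_mul, hps]
    ring
  rw [mutualInfo_eq_relEntropy_add hpq hμ, mul_add, mul_sum]
  simp only [mul_sum, mul_left_comm σ, hlog, mul_sub, sum_sub_distrib, hpotential]
  ring

end Coupling

theorem schrodinger_solution_is_unique_maximizer_general
    {X Y : Type*} [Fintype X] [Fintype Y]
    (p : X → ℝ) (q : Y → ℝ) (hp : ∀ x, 0 < p x) (hq : ∀ y, 0 < q y)
    (hps : ∑ x, p x = 1)
    (Φ : X × Y → ℝ) (σ : ℝ) (hσ : 0 < σ)
    (u : X → ℝ) (v : Y → ℝ) (c : ℝ)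
    (hu : ∑ x, p x * u x = 0) (hv : ∑ y, q y * v y = 0)
    (μ : X × Y → ℝ)
    (hμdef : ∀ x y, μ (x, y) = p x * q y * Real.exp ((Φ (x, y) - u x - v y - c) / σ))
    (hμ : IsCoupling p q μ) :
    IsGreatest {m : ℝ | ∃ μ' : X × Y → ℝ, IsCoupling p q μ' ∧
        m = (∑ x, ∑ y, μ' (x, y) * Φ (x, y)) - σ * mutualInfo p q μ'} c ∧
    c = (∑ x, ∑ y, μ (x, y) * Φ (x, y)) - σ * mutualInfo p q μ ∧
    (∀ μ' : X × Y → ℝ, IsCoupling p q μ' →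
      (∑ x, ∑ y, μ' (x, y) * Φ (x, y)) - σ * mutualInfo p q μ' = c → μ' = μ) := by
  have hμpos : ∀ z, 0 < μ z := fun ⟨x, y⟩ => by
    rw [hμdef]; exact mul_pos (mul_pos (hp x) (hq y)) (exp_pos _)
  have hvalue {μ'} (hμ' : IsCoupling p q μ') :=
    hμ'.sum_mul_sub_mutualInfo_eq hp hq hps hσ.ne' hu hv hμdef
  have hmass {μ'} (hμ' : IsCoupling p q μ') : ∑ z, μ' z = ∑ z, μ z :=
    hμ'.sum_eq.trans hμ.sum_eq.symm
  have hvalue_μ : (∑ x, ∑ y, μ (x, y) * Φ (x, y)) - σ * mutualInfo p q μ = c := by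
    rw [hvalue hμ, relEntropy_self, mul_zero, sub_zero]
  refine ⟨⟨⟨μ, hμ, hvalue_μ.symm⟩, ?_⟩, hvalue_μ.symm, ?_⟩
  · rintro m ⟨μ', hμ', rfl⟩
    rw [hvalue hμ']
    exact sub_le_self c (mul_nonneg hσ.le (relEntropy_nonneg hμ'.1 hμpos (hmass hμ')))
  · intro μ' hμ' hopt
    rw [hvalue hμ', sub_eq_self, mul_eq_zero] at hopt
    exact (relEntropy_eq_zero_iff hμ'.1 hμpos (hmass hμ')).1 (hopt.resolve_left hσ.ne')

theorem schrodinger_solution_is_unique_maximizer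
    {X Y : Type*} [Fintype X] [Fintype Y] [Nonempty X] [Nonempty Y]
    (p : X → ℝ) (q : Y → ℝ) (hp : ∀ x, 0 < p x) (hq : ∀ y, 0 < q y)
    (hps : ∑ x, p x = 1) (hqs : ∑ y, q y = 1)
    (Φ : X × Y → ℝ) (σ : ℝ) (hσ : 0 < σ)
    (u : X → ℝ) (v : Y → ℝ) (c : ℝ)
    (hu : ∑ x, p x * u x = 0) (hv : ∑ y, q y * v y = 0)
    (μ : X × Y → ℝ)
    (hμdef : ∀ x y, μ (x, y) = p x * q y * Real.exp ((Φ (x, y) - u x - v y - c) / σ))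
    (hμ : IsCoupling p q μ) :
    IsGreatest {m : ℝ | ∃ μ' : X × Y → ℝ, IsCoupling p q μ' ∧
        m = (∑ x, ∑ y, μ' (x, y) * Φ (x, y)) - σ * mutualInfo p q μ'} c ∧
    c = (∑ x, ∑ y, μ (x, y) * Φ (x, y)) - σ * mutualInfo p q μ ∧
    (∀ μ' : X × Y → ℝ, IsCoupling p q μ' →
      (∑ x, ∑ y, μ' (x, y) * Φ (x, y)) - σ * mutualInfo p q μ' = c → μ' = μ) :=
  schrodinger_solution_is_unique_maximizer_general p q hp hq hps Φ σ hσ u v c hu hv μ hμdef hμ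
end

section
/- Let Φ : X × Y → ℝ and σ > 0. Define Z = Σ_{x,y} p(x) q(y) exp(Φ(x,y)/σ) and r(x,y) = p(x) q(y) exp(Φ(x,y)/σ)/Z. Then for every coupling π ∈ M(p,q), Σ_{x,y} π(x,y) Φ(x,y) − σ I(π) = σ log Z − σ Σ_{x,y} π(x,y) log(π(x,y)/r(x,y)) (with the convention 0 log 0 = 0). Consequently, a coupling maximizes Σ π Φ − σ I(π) over M(p,q) if and only if it minimizes the Kullback–Leibler divergence Σ_{x,y} π(x,y) log(π(x,y)/r(x,y)) over M(p,q). -/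
open Finset Real

theorem entropic_matching_as_KL_projection
    {X Y : Type*} [Fintype X] [Fintype Y] [Nonempty X] [Nonempty Y]
    (p : X → ℝ) (q : Y → ℝ) (hp : ∀ x, 0 < p x) (hq : ∀ y, 0 < q y)
    (hps : ∑ x, p x = 1) (hqs : ∑ y, q y = 1)
    (Φ : X × Y → ℝ) (σ : ℝ) (hσ : 0 < σ)
    (Z : ℝ) (hZ : Z = ∑ x, ∑ y, p x * q y * Real.exp (Φ (x, y) / σ))
    (r : X × Y → ℝ) (hr : ∀ x y, r (x, y) = p x * q y * Real.exp (Φ (x, y) / σ) / Z) :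
    (∀ μ : X × Y → ℝ, IsCoupling p q μ →
      (∑ x, ∑ y, μ (x, y) * Φ (x, y)) - σ * mutualInfo p q μ
        = σ * Real.log Z
          - σ * ∑ x, ∑ y, μ (x, y) * Real.log (μ (x, y) / r (x, y))) ∧
    (∀ μ : X × Y → ℝ, IsCoupling p q μ →
      ((∀ μ' : X × Y → ℝ, IsCoupling p q μ' →
          (∑ x, ∑ y, μ' (x, y) * Φ (x, y)) - σ * mutualInfo p q μ'
            ≤ (∑ x, ∑ y, μ (x, y) * Φ (x, y)) - σ * mutualInfo p q μ)
        ↔ (∀ μ' : X × Y → ℝ, IsCoupling p q μ' →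
          (∑ x, ∑ y, μ (x, y) * Real.log (μ (x, y) / r (x, y)))
            ≤ ∑ x, ∑ y, μ' (x, y) * Real.log (μ' (x, y) / r (x, y))))) := by
  have hZpos : 0 < Z := by
    rw [hZ]
    apply Finset.sum_pos _ Finset.univ_nonempty
    intro x _
    apply Finset.sum_pos _ Finset.univ_nonempty
    intro y _
    exact mul_pos (mul_pos (hp x) (hq y)) (Real.exp_pos _)
  have main : ∀ μ : X × Y → ℝ, IsCoupling p q μ →
      (∑ x, ∑ y, μ (x, y) * Φ (x, y)) - σ * mutualInfo p q μ
        = σ * Real.log Z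
          - σ * ∑ x, ∑ y, μ (x, y) * Real.log (μ (x, y) / r (x, y)) := by
    intro μ hμ
    obtain ⟨hnn, hm1, hm2⟩ := hμ
    have hsum1 : ∑ x, ∑ y, μ (x, y) = 1 := by
      simp only [hm1]; exact hps
    have key : ∀ x y, σ * (μ (x, y) * Real.log (μ (x, y) / r (x, y)))
        = σ * (μ (x, y) * Real.log (μ (x, y) / (p x * q y)))
          - μ (x, y) * Φ (x, y) + σ * Real.log Z * μ (x, y) := by
      intro x y
      by_cases h0 : μ (x, y) = 0
      · simp [h0]
      have hμpos : 0 < μ (x, y) := lt_of_le_of_ne (hnn (x, y)) (Ne.symm h0)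
      have hpq : 0 < p x * q y * Real.exp (Φ (x, y) / σ) :=
        mul_pos (mul_pos (hp x) (hq y)) (Real.exp_pos _)
      have hrpos : 0 < r (x, y) := by rw [hr]; exact div_pos hpq hZpos
      have hlr : Real.log (r (x, y)) = Real.log (p x) + Real.log (q y) + Φ (x, y) / σ
          - Real.log Z := by
        rw [hr, Real.log_div hpq.ne' hZpos.ne',
          Real.log_mul (mul_pos (hp x) (hq y)).ne' (Real.exp_pos _).ne',
          Real.log_mul (hp x).ne' (hq y).ne', Real.log_exp]
      rw [Real.log_div h0 hrpos.ne', Real.log_div h0 (mul_pos (hp x) (hq y)).ne',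
        Real.log_mul (hp x).ne' (hq y).ne', hlr]
      field_simp
      ring
    have hσK : σ * ∑ x, ∑ y, μ (x, y) * Real.log (μ (x, y) / r (x, y))
        = σ * mutualInfo p q μ - (∑ x, ∑ y, μ (x, y) * Φ (x, y)) + σ * Real.log Z := by
      rw [mutualInfo, Finset.mul_sum, Finset.mul_sum]
      rw [show σ * Real.log Z = σ * Real.log Z * 1 by ring, ← hsum1]
      simp only [Finset.mul_sum, ← Finset.sum_add_distrib, ← Finset.sum_sub_distrib]
      exact Finset.sum_congr rfl fun x _ => Finset.sum_congr rfl fun y _ => key x y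
    linarith
  refine ⟨main, fun μ hμ => ?_⟩
  constructor
  · intro h μ' hμ'
    have h1 := h μ' hμ'
    rw [main μ hμ, main μ' hμ'] at h1
    nlinarith
  · intro h μ' hμ'
    have h1 := h μ' hμ'
    rw [main μ hμ, main μ' hμ']
    nlinarith
end

section
/- Let σ₁ > 0 and let π ∈ M(p,q) satisfy π(x,y) > 0 for all (x,y). Define F(U) = σ₁ Σ_x p(x) log(Σ_y exp(U(x,y)/σ₁)) − Σ_{x,y} π(x,y) U(x,y) for U : X × Y → ℝ. Then F is convex, and U is a global minimizer of F if and only if π(x,y) = p(x) exp(U(x,y)/σ₁) / (Σ_{y'} exp(U(x,y')/σ₁)) for all (x,y). -/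
open Finset Real

lemma gibbs_le {Y : Type*} [Fintype Y] [Nonempty Y] (ν : Y → ℝ) (hν : ∀ y, 0 < ν y)
    (hνs : ∑ y, ν y = 1) (a : Y → ℝ) :
    ∑ y, ν y * (a y - Real.log (ν y)) ≤ Real.log (∑ y, Real.exp (a y)) := by
  set s := ∑ y, Real.exp (a y) with hs_def
  have hs : 0 < s := Finset.sum_pos (fun y _ => Real.exp_pos _) Finset.univ_nonempty
  have hterm : ∀ y ∈ Finset.univ, ν y * (a y - Real.log (ν y)) ≤
      Real.exp (a y) / s - ν y + ν y * Real.log s := by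
    intro y _
    have ht : (0:ℝ) < Real.exp (a y) / (s * ν y) := div_pos (Real.exp_pos _) (mul_pos hs (hν y))
    have h1 := Real.log_le_sub_one_of_pos ht
    rw [Real.log_div (Real.exp_ne_zero _) (mul_pos hs (hν y)).ne',
      Real.log_exp, Real.log_mul hs.ne' (hν y).ne'] at h1
    have h2 := mul_le_mul_of_nonneg_left h1 (hν y).le
    have h3 : ν y * (Real.exp (a y) / (s * ν y) - 1) = Real.exp (a y) / s - ν y := by
      field_simp [(hν y).ne', hs.ne']
    nlinarith [h2]
  calc ∑ y, ν y * (a y - Real.log (ν y))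
      ≤ ∑ y, (Real.exp (a y) / s - ν y + ν y * Real.log s) := Finset.sum_le_sum hterm
    _ = Real.log s := by
        rw [Finset.sum_add_distrib, Finset.sum_sub_distrib, ← Finset.sum_div,
          ← Finset.sum_mul, hνs, ← hs_def, div_self hs.ne']
        ring

lemma gibbs_eq_iff {Y : Type*} [Fintype Y] [Nonempty Y] (ν : Y → ℝ) (hν : ∀ y, 0 < ν y)
    (hνs : ∑ y, ν y = 1) (a : Y → ℝ) :
    (∑ y, ν y * (a y - Real.log (ν y)) = Real.log (∑ y, Real.exp (a y))) ↔
      ∀ y, ν y = Real.exp (a y) / ∑ y', Real.exp (a y') := by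
  set s := ∑ y, Real.exp (a y) with hs_def
  have hs : 0 < s := Finset.sum_pos (fun y _ => Real.exp_pos _) Finset.univ_nonempty
  constructor
  · intro heq
    by_contra hcon
    push_neg at hcon
    obtain ⟨y₀, hy₀⟩ := hcon
    have hterm : ∀ y ∈ Finset.univ, ν y * (a y - Real.log (ν y)) ≤
        Real.exp (a y) / s - ν y + ν y * Real.log s := by
      intro y _
      have ht : (0:ℝ) < Real.exp (a y) / (s * ν y) := div_pos (Real.exp_pos _) (mul_pos hs (hν y))
      have h1 := Real.log_le_sub_one_of_pos ht
      rw [Real.log_div (Real.exp_ne_zero _) (mul_pos hs (hν y)).ne',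
        Real.log_exp, Real.log_mul hs.ne' (hν y).ne'] at h1
      have h2 := mul_le_mul_of_nonneg_left h1 (hν y).le
      have h3 : ν y * (Real.exp (a y) / (s * ν y) - 1) = Real.exp (a y) / s - ν y := by
        field_simp [(hν y).ne', hs.ne']
      nlinarith [h2]
    have hstrict : ν y₀ * (a y₀ - Real.log (ν y₀)) <
        Real.exp (a y₀) / s - ν y₀ + ν y₀ * Real.log s := by
      have ht : (0:ℝ) < Real.exp (a y₀) / (s * ν y₀) := div_pos (Real.exp_pos _) (mul_pos hs (hν y₀))
      have hne : Real.exp (a y₀) / (s * ν y₀) ≠ 1 := by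
        intro h
        apply hy₀
        have h' : Real.exp (a y₀) = s * ν y₀ := by
          rw [div_eq_one_iff_eq (mul_pos hs (hν y₀)).ne'] at h; exact h
        rw [eq_div_iff hs.ne', mul_comm]
        exact h'.symm
      have h1 := Real.log_lt_sub_one_of_pos ht hne
      rw [Real.log_div (Real.exp_ne_zero _) (mul_pos hs (hν y₀)).ne',
        Real.log_exp, Real.log_mul hs.ne' (hν y₀).ne'] at h1
      have h2 := mul_lt_mul_of_pos_left h1 (hν y₀)
      have h3 : ν y₀ * (Real.exp (a y₀) / (s * ν y₀) - 1) = Real.exp (a y₀) / s - ν y₀ := by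
        field_simp [(hν y₀).ne', hs.ne']
      nlinarith [h2]
    have hlt : ∑ y, ν y * (a y - Real.log (ν y)) <
        ∑ y, (Real.exp (a y) / s - ν y + ν y * Real.log s) :=
      Finset.sum_lt_sum hterm ⟨y₀, Finset.mem_univ y₀, hstrict⟩
    have : ∑ y, (Real.exp (a y) / s - ν y + ν y * Real.log s) = Real.log s := by
      rw [Finset.sum_add_distrib, Finset.sum_sub_distrib, ← Finset.sum_div,
        ← Finset.sum_mul, hνs, ← hs_def, div_self hs.ne']
      ring
    rw [this] at hlt
    exact absurd heq hlt.ne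
  · intro h
    have : ∀ y ∈ Finset.univ, ν y * (a y - Real.log (ν y)) = ν y * Real.log s := by
      intro y _
      rw [h y, Real.log_div (Real.exp_ne_zero _) hs.ne', Real.log_exp]
      ring
    rw [Finset.sum_congr rfl this, ← Finset.sum_mul, hνs, one_mul]


theorem logit_dual_convex_and_minimizer_iff
    {X Y : Type*} [Fintype X] [Fintype Y] [Nonempty X] [Nonempty Y]
    (p : X → ℝ) (q : Y → ℝ) (hp : ∀ x, 0 < p x) (hq : ∀ y, 0 < q y)
    (hps : ∑ x, p x = 1) (hqs : ∑ y, q y = 1)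
    (σ₁ : ℝ) (hσ₁ : 0 < σ₁)
    (μ : X × Y → ℝ) (hμ : IsCoupling p q μ) (hμpos : ∀ z, 0 < μ z)
    (F : (X × Y → ℝ) → ℝ)
    (hF : ∀ U : X × Y → ℝ,
      F U = σ₁ * (∑ x, p x * Real.log (∑ y, Real.exp (U (x, y) / σ₁)))
        - ∑ x, ∑ y, μ (x, y) * U (x, y)) :
    ConvexOn ℝ Set.univ F ∧
    ∀ U : X × Y → ℝ,
      (∀ U' : X × Y → ℝ, F U ≤ F U') ↔
      (∀ x y, μ (x, y)
        = p x * Real.exp (U (x, y) / σ₁) / ∑ y', Real.exp (U (x, y') / σ₁)) := by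
  obtain ⟨hμnn, hμ1, hμ2⟩ := hμ
  have hνpos : ∀ x y, 0 < μ (x, y) / p x := fun x y => div_pos (hμpos _) (hp x)
  have hνs : ∀ x, ∑ y, μ (x, y) / p x = 1 := fun x => by
    rw [← Finset.sum_div, hμ1 x, div_self (hp x).ne']
  constructor
  · -- convexity
    refine ⟨convex_univ, fun U _ V _ θ τ hθ hτ hθτ => ?_⟩
    simp only [smul_eq_mul]
    rw [hF, hF, hF]
    have hW : ∀ z : X × Y, (θ • U + τ • V) z = θ * U z + τ * V z := fun z => by
      simp [smul_eq_mul]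
    have hlse : ∀ x, Real.log (∑ y, Real.exp ((θ • U + τ • V) (x, y) / σ₁)) ≤
        θ * Real.log (∑ y, Real.exp (U (x, y) / σ₁)) +
        τ * Real.log (∑ y, Real.exp (V (x, y) / σ₁)) := by
      intro x
      have hsw : (0:ℝ) < ∑ y, Real.exp ((θ • U + τ • V) (x, y) / σ₁) :=
        Finset.sum_pos (fun y _ => Real.exp_pos _) Finset.univ_nonempty
      set ρ : Y → ℝ := fun y =>
        Real.exp ((θ • U + τ • V) (x, y) / σ₁) / ∑ y', Real.exp ((θ • U + τ • V) (x, y') / σ₁)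
        with hρ_def
      have hρpos : ∀ y, 0 < ρ y := fun y => div_pos (Real.exp_pos _) hsw
      have hρs : ∑ y, ρ y = 1 := by
        rw [hρ_def, ← Finset.sum_div, div_self hsw.ne']
      have heq : ∑ y, ρ y * ((θ • U + τ • V) (x, y) / σ₁ - Real.log (ρ y)) =
          Real.log (∑ y, Real.exp ((θ • U + τ • V) (x, y) / σ₁)) :=
        (gibbs_eq_iff ρ hρpos hρs (fun y => (θ • U + τ • V) (x, y) / σ₁)).mpr (fun y => rfl)
      have hsplit : ∑ y, ρ y * ((θ • U + τ • V) (x, y) / σ₁ - Real.log (ρ y)) =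
          θ * ∑ y, ρ y * (U (x, y) / σ₁ - Real.log (ρ y)) +
          τ * ∑ y, ρ y * (V (x, y) / σ₁ - Real.log (ρ y)) := by
        rw [Finset.mul_sum, Finset.mul_sum, ← Finset.sum_add_distrib]
        refine Finset.sum_congr rfl fun y _ => ?_
        have hwy : (θ • U + τ • V) (x, y) / σ₁ =
            θ * (U (x, y) / σ₁) + τ * (V (x, y) / σ₁) := by
          rw [hW]; ring
        rw [hwy]
        linear_combination (ρ y * Real.log (ρ y)) * hθτ
      have h1 := gibbs_le ρ hρpos hρs (fun y => U (x, y) / σ₁)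
      have h2 := gibbs_le ρ hρpos hρs (fun y => V (x, y) / σ₁)
      rw [← heq, hsplit]
      exact add_le_add (mul_le_mul_of_nonneg_left h1 hθ) (mul_le_mul_of_nonneg_left h2 hτ)
    have hsum : ∑ x, p x * Real.log (∑ y, Real.exp ((θ • U + τ • V) (x, y) / σ₁)) ≤
        θ * ∑ x, p x * Real.log (∑ y, Real.exp (U (x, y) / σ₁)) +
        τ * ∑ x, p x * Real.log (∑ y, Real.exp (V (x, y) / σ₁)) := by
      calc ∑ x, p x * Real.log (∑ y, Real.exp ((θ • U + τ • V) (x, y) / σ₁))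
          ≤ ∑ x, p x * (θ * Real.log (∑ y, Real.exp (U (x, y) / σ₁)) +
              τ * Real.log (∑ y, Real.exp (V (x, y) / σ₁))) :=
            Finset.sum_le_sum fun x _ => mul_le_mul_of_nonneg_left (hlse x) (hp x).le
        _ = _ := by
            rw [Finset.mul_sum, Finset.mul_sum, ← Finset.sum_add_distrib]
            exact Finset.sum_congr rfl fun x _ => by ring
    have hlin : ∑ x, ∑ y, μ (x, y) * (θ • U + τ • V) (x, y) =
        θ * ∑ x, ∑ y, μ (x, y) * U (x, y) + τ * ∑ x, ∑ y, μ (x, y) * V (x, y) := by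
      simp only [hW]
      rw [Finset.mul_sum, Finset.mul_sum, ← Finset.sum_add_distrib]
      refine Finset.sum_congr rfl fun x _ => ?_
      rw [Finset.mul_sum, Finset.mul_sum, ← Finset.sum_add_distrib]
      exact Finset.sum_congr rfl fun y _ => by ring
    rw [hlin]
    nlinarith [mul_le_mul_of_nonneg_left hsum hσ₁.le]
  · -- minimizer characterization
    have hx : ∀ (x : X) (U : X × Y → ℝ),
        σ₁ * p x * (Real.log (∑ y, Real.exp (U (x, y) / σ₁)) -
          ∑ y, μ (x, y) / p x * (U (x, y) / σ₁ - Real.log (μ (x, y) / p x))) =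
        σ₁ * (p x * Real.log (∑ y, Real.exp (U (x, y) / σ₁))) -
          (∑ y, μ (x, y) * U (x, y)) + σ₁ * ∑ y, μ (x, y) * Real.log (μ (x, y) / p x) := by
      intro x U
      have : σ₁ * p x * ∑ y, μ (x, y) / p x * (U (x, y) / σ₁ - Real.log (μ (x, y) / p x)) =
          ∑ y, (μ (x, y) * U (x, y) - σ₁ * (μ (x, y) * Real.log (μ (x, y) / p x))) := by
        rw [Finset.mul_sum]
        refine Finset.sum_congr rfl fun y _ => ?_
        field_simp [(hp x).ne', hσ₁.ne']
      rw [mul_sub, this, Finset.sum_sub_distrib, ← Finset.mul_sum]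
      ring
    have hrep : ∀ U : X × Y → ℝ, F U =
        (-σ₁ * ∑ x, ∑ y, μ (x, y) * Real.log (μ (x, y) / p x)) +
        ∑ x, σ₁ * p x * (Real.log (∑ y, Real.exp (U (x, y) / σ₁)) -
          ∑ y, μ (x, y) / p x * (U (x, y) / σ₁ - Real.log (μ (x, y) / p x))) := by
      intro U
      rw [hF, Finset.sum_congr rfl fun x _ => hx x U]
      rw [Finset.sum_add_distrib, Finset.sum_sub_distrib, ← Finset.mul_sum, ← Finset.mul_sum,
        Finset.mul_sum (a := σ₁)]
      ring
    have hge : ∀ U : X × Y → ℝ,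
        (-σ₁ * ∑ x, ∑ y, μ (x, y) * Real.log (μ (x, y) / p x)) ≤ F U := by
      intro U
      rw [hrep U]
      have : (0:ℝ) ≤ ∑ x, σ₁ * p x * (Real.log (∑ y, Real.exp (U (x, y) / σ₁)) -
          ∑ y, μ (x, y) / p x * (U (x, y) / σ₁ - Real.log (μ (x, y) / p x))) := by
        refine Finset.sum_nonneg fun x _ => mul_nonneg (mul_nonneg hσ₁.le (hp x).le) ?_
        rw [sub_nonneg]
        exact gibbs_le (fun y => μ (x, y) / p x) (hνpos x) (hνs x) (fun y => U (x, y) / σ₁)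
      linarith
    have hU₀ : F (fun z => σ₁ * Real.log (μ z / p z.1)) =
        -σ₁ * ∑ x, ∑ y, μ (x, y) * Real.log (μ (x, y) / p x) := by
      rw [hrep]
      have : ∀ x ∈ Finset.univ, σ₁ * p x *
          (Real.log (∑ y, Real.exp ((σ₁ * Real.log (μ (x, y) / p x)) / σ₁)) -
            ∑ y, μ (x, y) / p x * ((σ₁ * Real.log (μ (x, y) / p x)) / σ₁ -
              Real.log (μ (x, y) / p x))) = 0 := by
        intro x _
        have he : ∀ y, Real.exp ((σ₁ * Real.log (μ (x, y) / p x)) / σ₁) = μ (x, y) / p x := by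
          intro y
          rw [mul_div_cancel_left₀ _ hσ₁.ne', Real.exp_log (hνpos x y)]
        have h1 : ∑ y, Real.exp ((σ₁ * Real.log (μ (x, y) / p x)) / σ₁) = 1 := by
          rw [Finset.sum_congr rfl fun y _ => he y]
          exact hνs x
        have h2 : ∀ y, μ (x, y) / p x * ((σ₁ * Real.log (μ (x, y) / p x)) / σ₁ -
            Real.log (μ (x, y) / p x)) = 0 := by
          intro y
          rw [mul_div_cancel_left₀ _ hσ₁.ne']
          ring
        rw [h1, Finset.sum_congr rfl fun y _ => h2 y, Finset.sum_const_zero, Real.log_one]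
        ring
      rw [Finset.sum_congr rfl this, Finset.sum_const_zero]
      ring
    intro U
    constructor
    · intro h x y
      have hEq : F U = -σ₁ * ∑ x, ∑ y, μ (x, y) * Real.log (μ (x, y) / p x) :=
        le_antisymm (le_trans (h _) (le_of_eq hU₀)) (hge U)
      have hzero : ∑ x, σ₁ * p x * (Real.log (∑ y, Real.exp (U (x, y) / σ₁)) -
          ∑ y, μ (x, y) / p x * (U (x, y) / σ₁ - Real.log (μ (x, y) / p x))) = 0 := by
        have := hrep U
        rw [hEq] at this
        linarith
      have hxzero := (Finset.sum_eq_zero_iff_of_nonneg (fun x _ =>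
        mul_nonneg (mul_nonneg hσ₁.le (hp x).le) (sub_nonneg.2
          (gibbs_le (fun y => μ (x, y) / p x) (hνpos x) (hνs x)
            (fun y => U (x, y) / σ₁))))).mp hzero x (Finset.mem_univ x)
      have heq : ∑ y, μ (x, y) / p x * (U (x, y) / σ₁ - Real.log (μ (x, y) / p x)) =
          Real.log (∑ y, Real.exp (U (x, y) / σ₁)) := by
        have hne : σ₁ * p x ≠ 0 := (mul_pos hσ₁ (hp x)).ne'
        have := mul_eq_zero.mp hxzero
        rcases this with h' | h'
        · exact absurd h' hne
        · linarith [sub_eq_zero.mp h']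
      have := (gibbs_eq_iff (fun y => μ (x, y) / p x) (hνpos x) (hνs x)
        (fun y => U (x, y) / σ₁)).mp heq y
      rw [mul_div_assoc, ← this, ← mul_div_assoc, mul_div_cancel_left₀ _ (hp x).ne']
    · intro h U'
      refine le_trans (le_of_eq ?_) (hge U')
      rw [hrep U]
      have hz : ∑ x, σ₁ * p x * (Real.log (∑ y, Real.exp (U (x, y) / σ₁)) -
          ∑ y, μ (x, y) / p x * (U (x, y) / σ₁ - Real.log (μ (x, y) / p x))) = 0 := by
        refine Finset.sum_eq_zero fun x _ => ?_
        have heq : ∑ y, μ (x, y) / p x * (U (x, y) / σ₁ - Real.log (μ (x, y) / p x)) =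
            Real.log (∑ y, Real.exp (U (x, y) / σ₁)) := by
          refine (gibbs_eq_iff (fun y => μ (x, y) / p x) (hνpos x) (hνs x)
            (fun y => U (x, y) / σ₁)).mpr fun y => ?_
          show μ (x, y) / p x = _
          rw [h x y, mul_div_assoc, mul_div_cancel_left₀ _ (hp x).ne']
        rw [heq, sub_self, mul_zero]
      rw [hz]
      ring
end

section
/- Let Φ : X × Y → ℝ and σ > 0. If π ∈ M(p,q) maximizes π' ↦ Σ_{x,y} π'(x,y) Φ(x,y) − σ I(π') over M(p,q), then π has full support: π(x,y) > 0 for every (x,y) ∈ X × Y. In particular, a pure matching (a coupling supported on the graph of a bijection between the supports) can never be optimal when both X and Y have at least two elements. -/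
open Finset Real

/-!
If a maximiser `μ` vanished at some `z₀`, move it a fraction `t` towards the product
coupling `p ⊗ q`. By convexity of `c ↦ c log (c / r)` the mutual information drops by at
least `t (I(μ) - p(z₀) q(z₀) log t)`, the second term coming from the newly filled entry
`z₀`, while the transport term changes only by `O(t)`. As `-log t → ∞`, the regularised
value strictly increases for small `t`. A pure matching has zero entries as soon as `|Y| ≥ 2`.
-/

open Filter Topology

lemma convexOn_mul_log_div {r : ℝ} (hr : 0 < r) :
    ConvexOn ℝ (Set.Ici 0) fun c => c * log (c / r) := by
  have hlin := ((LinearMap.id : ℝ →ₗ[ℝ] ℝ).smulRight (-log r)).convexOn (convex_Ici 0)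
  refine (convexOn_mul_log.add hlin).congr fun c hc => ?_
  rcases (Set.mem_Ici.1 hc).eq_or_lt with rfl | hc
  · simp
  · simp only [Pi.add_apply, log_div hc.ne' hr.ne', LinearMap.coe_smulRight, LinearMap.id_coe,
      id_eq, smul_eq_mul, mul_neg]
    ring

lemma exists_mul_log_lt {a : ℝ} (C : ℝ) (ha : 0 < a) :
    ∃ t ∈ Set.Ioc (0 : ℝ) 1, a * log t < C := by
  have hlog := tendsto_log_nhdsGT_zero.eventually (eventually_lt_atBot (C / a))
  obtain ⟨t, hlog, ht⟩ := (hlog.and (Ioc_mem_nhdsGT one_pos)).exists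
  exact ⟨t, ht, by rwa [lt_div_iff₀' ha] at hlog⟩

section Coupling

variable {X Y : Type*} [Fintype X] [Fintype Y] {p : X → ℝ} {q : Y → ℝ}

lemma IsCoupling.lineMap {μ ν : X × Y → ℝ} (hμ : IsCoupling p q μ)
    (hν : IsCoupling p q ν) {t : ℝ} (ht₀ : 0 ≤ t) (ht₁ : t ≤ 1) :
    IsCoupling p q fun z => (1 - t) * μ z + t * ν z := by
  refine ⟨fun z => ?_, fun x => ?_, fun y => ?_⟩
  · exact add_nonneg (mul_nonneg (sub_nonneg.2 ht₁) (hμ.1 z)) (mul_nonneg ht₀ (hν.1 z))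
  · simp only [sum_add_distrib, ← mul_sum, hμ.2.1 x, hν.2.1 x]
    ring
  · simp only [sum_add_distrib, ← mul_sum, hμ.2.2 y, hν.2.2 y]
    ring

lemma isCoupling_prod (hp : ∀ x, 0 ≤ p x) (hq : ∀ y, 0 ≤ q y)
    (hps : ∑ x, p x = 1) (hqs : ∑ y, q y = 1) :
    IsCoupling p q fun z => p z.1 * q z.2 :=
  ⟨fun z => mul_nonneg (hp z.1) (hq z.2),
    fun x => by simp [← mul_sum, hqs], fun y => by simp [← sum_mul, hps]⟩

lemma mutualInfo_eq_sum (μ : X × Y → ℝ) :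
    mutualInfo p q μ = ∑ z, μ z * log (μ z / (p z.1 * q z.2)) :=
  (Fintype.sum_prod_type fun z => μ z * log (μ z / (p z.1 * q z.2))).symm

noncomputable def regularizedValue (p : X → ℝ) (q : Y → ℝ) (Φ : X × Y → ℝ) (σ : ℝ)
    (μ : X × Y → ℝ) : ℝ :=
  ∑ x, ∑ y, μ (x, y) * Φ (x, y) - σ * mutualInfo p q μ

lemma sum_sum_lineMap_mul (μ ν Φ : X × Y → ℝ) (t : ℝ) :
    ∑ x, ∑ y, ((1 - t) * μ (x, y) + t * ν (x, y)) * Φ (x, y) =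
      (1 - t) * ∑ x, ∑ y, μ (x, y) * Φ (x, y) + t * ∑ x, ∑ y, ν (x, y) * Φ (x, y) := by
  simp only [add_mul, sum_add_distrib, mul_assoc, ← mul_sum]

lemma mutualInfo_lineMap_prod_le (hp : ∀ x, 0 < p x) (hq : ∀ y, 0 < q y)
    {μ : X × Y → ℝ} (hμ : ∀ z, 0 ≤ μ z) {z₀ : X × Y} (hz₀ : μ z₀ = 0)
    {t : ℝ} (ht₀ : 0 < t) (ht₁ : t ≤ 1) :
    mutualInfo p q (fun z => (1 - t) * μ z + t * (p z.1 * q z.2)) ≤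
      (1 - t) * mutualInfo p q μ + t * (p z₀.1 * q z₀.2) * log t := by
  classical
  have hρ : ∀ z : X × Y, 0 < p z.1 * q z.2 := fun z => mul_pos (hp z.1) (hq z.2)
  have hterm : ∀ z, ((1 - t) * μ z + t * (p z.1 * q z.2)) *
        log (((1 - t) * μ z + t * (p z.1 * q z.2)) / (p z.1 * q z.2)) ≤
      (1 - t) * (μ z * log (μ z / (p z.1 * q z.2))) +
        if z = z₀ then t * (p z₀.1 * q z₀.2) * log t else 0 := by
    intro z
    split_ifs with hz
    · subst hz
      rw [hz₀, mul_zero, zero_add, mul_div_cancel_right₀ _ (hρ z).ne']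
      simp
    · have := (convexOn_mul_log_div (hρ z)).2 (Set.mem_Ici.2 (hμ z)) (Set.mem_Ici.2 (hρ z).le)
        (sub_nonneg.2 ht₁) ht₀.le (by ring)
      simpa [div_self (hρ z).ne'] using this
  rw [mutualInfo_eq_sum, mutualInfo_eq_sum, mul_sum]
  refine (sum_le_sum fun z _ => hterm z).trans_eq ?_
  rw [sum_add_distrib, sum_ite_eq' univ z₀, if_pos (mem_univ _)]

theorem IsCoupling.pos_of_isMaxOn (hp : ∀ x, 0 < p x) (hq : ∀ y, 0 < q y)
    (hps : ∑ x, p x = 1) (hqs : ∑ y, q y = 1) {Φ : X × Y → ℝ} {σ : ℝ} (hσ : 0 < σ)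
    {μ : X × Y → ℝ} (hμ : IsCoupling p q μ)
    (hopt : IsMaxOn (regularizedValue p q Φ σ) {μ' | IsCoupling p q μ'} μ) (z₀ : X × Y) :
    0 < μ z₀ := by
  refine (hμ.1 z₀).lt_of_ne fun hz₀ => ?_
  set L := ∑ x, ∑ y, μ (x, y) * Φ (x, y)
  set A := ∑ x, ∑ y, p x * q y * Φ (x, y)
  obtain ⟨t, ⟨ht₀, ht₁⟩, hlog⟩ := exists_mul_log_lt (A - L + σ * mutualInfo p q μ)
    (mul_pos hσ (mul_pos (hp z₀.1) (hq z₀.2)))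
  have hν := hμ.lineMap (isCoupling_prod (fun x => (hp x).le) (fun y => (hq y).le) hps hqs)
    ht₀.le ht₁
  have hgain := isMaxOn_iff.1 hopt _ hν
  rw [regularizedValue, regularizedValue, sum_sum_lineMap_mul μ fun z => p z.1 * q z.2] at hgain
  have hI := mutualInfo_lineMap_prod_le hp hq hμ.1 hz₀.symm ht₀ ht₁
  nlinarith [mul_pos ht₀ (sub_pos.2 hlog), mul_le_mul_of_nonneg_left hI hσ.le]

end Coupling

theorem optimal_coupling_full_support_and_no_pure_general
    {X Y : Type*} [Fintype X] [Fintype Y]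
    (p : X → ℝ) (q : Y → ℝ) (hp : ∀ x, 0 < p x) (hq : ∀ y, 0 < q y)
    (hps : ∑ x, p x = 1) (hqs : ∑ y, q y = 1)
    (Φ : X × Y → ℝ) (σ : ℝ) (hσ : 0 < σ) :
    (∀ μ : X × Y → ℝ, IsCoupling p q μ →
      (∀ μ' : X × Y → ℝ, IsCoupling p q μ' →
        (∑ x, ∑ y, μ' (x, y) * Φ (x, y)) - σ * mutualInfo p q μ'
          ≤ (∑ x, ∑ y, μ (x, y) * Φ (x, y)) - σ * mutualInfo p q μ) →
      ∀ z : X × Y, 0 < μ z) ∧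
    (1 < Fintype.card X → 1 < Fintype.card Y →
      ∀ μ : X × Y → ℝ, IsCoupling p q μ →
      (∃ T : X ≃ Y, ∀ x y, μ (x, y) ≠ 0 → y = T x) →
      ¬ (∀ μ' : X × Y → ℝ, IsCoupling p q μ' →
        (∑ x, ∑ y, μ' (x, y) * Φ (x, y)) - σ * mutualInfo p q μ'
          ≤ (∑ x, ∑ y, μ (x, y) * Φ (x, y)) - σ * mutualInfo p q μ)) := by
  refine ⟨fun μ hμ hopt => hμ.pos_of_isMaxOn hp hq hps hqs hσ (isMaxOn_iff.2 hopt), ?_⟩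
  rintro - hY μ hμ ⟨T, hT⟩ hopt
  obtain ⟨y₁, y₂, hy⟩ := Fintype.exists_pair_of_one_lt_card hY
  have hpos := hμ.pos_of_isMaxOn hp hq hps hqs hσ (isMaxOn_iff.2 hopt) (T.symm y₁, y₂)
  exact hy.symm (by simpa using hT _ _ hpos.ne')

theorem optimal_coupling_full_support_and_no_pure
    {X Y : Type*} [Fintype X] [Fintype Y] [Nonempty X] [Nonempty Y]
    (p : X → ℝ) (q : Y → ℝ) (hp : ∀ x, 0 < p x) (hq : ∀ y, 0 < q y)
    (hps : ∑ x, p x = 1) (hqs : ∑ y, q y = 1)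
    (Φ : X × Y → ℝ) (σ : ℝ) (hσ : 0 < σ) :
    (∀ μ : X × Y → ℝ, IsCoupling p q μ →
      (∀ μ' : X × Y → ℝ, IsCoupling p q μ' →
        (∑ x, ∑ y, μ' (x, y) * Φ (x, y)) - σ * mutualInfo p q μ'
          ≤ (∑ x, ∑ y, μ (x, y) * Φ (x, y)) - σ * mutualInfo p q μ) →
      ∀ z : X × Y, 0 < μ z) ∧
    (1 < Fintype.card X → 1 < Fintype.card Y →
      ∀ μ : X × Y → ℝ, IsCoupling p q μ →
      (∃ T : X ≃ Y, ∀ x y, μ (x, y) ≠ 0 → y = T x) →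
      ¬ (∀ μ' : X × Y → ℝ, IsCoupling p q μ' →
        (∑ x, ∑ y, μ' (x, y) * Φ (x, y)) - σ * mutualInfo p q μ'
          ≤ (∑ x, ∑ y, μ (x, y) * Φ (x, y)) - σ * mutualInfo p q μ)) :=
  optimal_coupling_full_support_and_no_pure_general p q hp hq hps hqs Φ σ hσ
end

section
/- Let μ be the standard Gumbel probability measure on ℝ, i.e. the Borel probability measure whose cumulative distribution function is F(t) = exp(−exp(−t)). Let n ≥ 1 and a : Fin n → ℝ, and let μⁿ be the n-fold product of μ on ℝⁿ. Then ∫ max_{i} (a_i + x_i) dμⁿ(x) = γ + log(Σ_{i} exp(a_i)), where γ is the Euler–Mascheroni constant. -/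
/-!
If `X` is standard Gumbel then `exp (-X)` is standard exponential, so
`E X = -∫₀^∞ log t e^{-t} dt = -Γ'(1) = γ`. Gumbel laws are max-stable: for independent
standard Gumbel `Xᵢ`, `P(maxᵢ (aᵢ + Xᵢ) ≤ t) = ∏ᵢ exp (-e^{aᵢ - t}) = exp (-e^{-(t - c)})` with
`c = log ∑ᵢ e^{aᵢ}`, so `maxᵢ (aᵢ + Xᵢ) - c` is again standard Gumbel and has mean `γ`.
-/

open MeasureTheory Real Set

theorem integral_log_mul_exp_neg_Ioi :
    ∫ t in Ioi (0 : ℝ), log t * exp (-t) = -eulerMascheroniConstant := by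
  have hΓ : Complex.Gamma =ᶠ[nhds 1] Complex.GammaIntegral := by
    filter_upwards [(isOpen_lt continuous_const Complex.continuous_re).mem_nhds
      (by norm_num : (0 : ℝ) < (1 : ℂ).re)] with s hs using Complex.Gamma_eq_integral hs
  have h := (Complex.hasDerivAt_Gamma_one.congr_of_eventuallyEq hΓ.symm).unique
    (Complex.hasDerivAt_GammaIntegral (by norm_num))
  simp only [sub_self, Complex.cpow_zero, one_mul, ← Complex.ofReal_mul] at h
  exact_mod_cast h.symm

theorem integrableOn_log_mul_exp_neg_Ioi :
    IntegrableOn (fun t => log t * exp (-t)) (Ioi 0) := by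
  by_contra h
  -- otherwise the integral would be the junk value `0`, but it is `-γ < 0`
  have := integral_log_mul_exp_neg_Ioi
  rw [integral_undef h] at this
  linarith [one_half_lt_eulerMascheroniConstant]

theorem lintegral_ofReal_exp_neg_Ioi (c : ℝ) :
    ∫⁻ t in Ioi c, ENNReal.ofReal (exp (-t)) = ENNReal.ofReal (exp (-c)) := by
  rw [← ofReal_integral_eq_lintegral_ofReal (integrableOn_exp_neg_Ioi c)
    (.of_forall fun t => (exp_pos _).le), integral_exp_neg_Ioi]

noncomputable def stdExponential : Measure ℝ :=
  (volume.restrict (Ioi 0)).withDensity fun t => ENNReal.ofReal (exp (-t))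

theorem stdExponential_apply {s : Set ℝ} (hs : MeasurableSet s) :
    stdExponential s = ∫⁻ t in s ∩ Ioi 0, ENNReal.ofReal (exp (-t)) := by
  rw [stdExponential, withDensity_apply _ hs, Measure.restrict_restrict hs]

instance : IsProbabilityMeasure stdExponential where
  measure_univ := by
    rw [stdExponential_apply MeasurableSet.univ, univ_inter, lintegral_ofReal_exp_neg_Ioi]
    simp

theorem integral_stdExponential (g : ℝ → ℝ) :
    ∫ t, g t ∂stdExponential = ∫ t in Ioi 0, exp (-t) * g t := by
  rw [stdExponential, integral_withDensity_eq_integral_toReal_smul (by fun_prop)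
    (.of_forall fun _ => ENNReal.ofReal_lt_top)]
  simp only [ENNReal.toReal_ofReal (exp_nonneg _), smul_eq_mul]

theorem integrable_stdExponential_iff {g : ℝ → ℝ} :
    Integrable g stdExponential ↔ IntegrableOn (fun t => exp (-t) * g t) (Ioi 0) := by
  rw [stdExponential, integrable_withDensity_iff_integrable_smul' (by fun_prop)
    (.of_forall fun _ => ENNReal.ofReal_lt_top)]
  simp only [ENNReal.toReal_ofReal (exp_nonneg _), smul_eq_mul, IntegrableOn]

theorem measurable_iSup_add {ι : Type*} [Countable ι] (a : ι → ℝ) :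
    Measurable fun x : ι → ℝ => ⨆ i, a i + x i :=
  Measurable.iSup fun i => (measurable_pi_apply i).const_add _

theorem setOf_iSup_add_le_eq_pi {ι : Type*} [Finite ι] [Nonempty ι] (a : ι → ℝ) (t : ℝ) :
    {x : ι → ℝ | (⨆ i, a i + x i) ≤ t} = univ.pi fun i => Iic (t - a i) := by
  ext x
  simp only [mem_ofPred_eq, ciSup_le_iff (finite_range _).bddAbove, mem_univ_pi, mem_Iic,
    le_sub_iff_add_le']

theorem sum_exp_neg_sub_log_sum_exp {ι : Type*} [Fintype ι] [Nonempty ι] (a : ι → ℝ) (t : ℝ) :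
    ∑ i, exp (-(t + log (∑ j, exp (a j)) - a i)) = exp (-t) := by
  have hS : 0 < ∑ j, exp (a j) := Finset.sum_pos (fun j _ => exp_pos _) Finset.univ_nonempty
  simp_rw [sub_eq_add_neg, neg_add, neg_neg, exp_add, ← Finset.mul_sum, exp_neg (log _), exp_log hS]
  field_simp

def IsStdGumbel (μ : Measure ℝ) : Prop :=
  ∀ t : ℝ, μ (Iic t) = ENNReal.ofReal (exp (-exp (-t)))

namespace IsStdGumbel

variable {μ : Measure ℝ}

theorem eq_map_neg_log (hμ : IsStdGumbel μ) :
    μ = stdExponential.map fun t => -log t := by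
  refine (Measure.ext_of_Iic _ _ fun c => ?_).symm
  rw [Measure.map_apply (by fun_prop) measurableSet_Iic, hμ, stdExponential_apply (by measurability)]
  have : (fun t => -log t) ⁻¹' Iic c ∩ Ioi 0 = Ici (exp (-c)) := by
    ext t
    simp only [mem_inter_iff, mem_preimage, mem_Iic, mem_Ioi, mem_Ici, neg_le]
    exact ⟨fun ⟨h, ht⟩ => (le_log_iff_exp_le ht).1 h,
      fun h => ⟨(le_log_iff_exp_le ((exp_pos _).trans_le h)).2 h, (exp_pos _).trans_le h⟩⟩
  rw [this, setLIntegral_congr Ioi_ae_eq_Ici.symm, lintegral_ofReal_exp_neg_Ioi]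

theorem isProbabilityMeasure (hμ : IsStdGumbel μ) : IsProbabilityMeasure μ := by
  rw [hμ.eq_map_neg_log]
  exact Measure.isProbabilityMeasure_map (by fun_prop)

theorem integrable_id (hμ : IsStdGumbel μ) : Integrable (fun x => x) μ := by
  rw [hμ.eq_map_neg_log, integrable_map_measure (by fun_prop) (by fun_prop), Function.comp_def,
    integrable_stdExponential_iff]
  exact integrableOn_log_mul_exp_neg_Ioi.neg.congr_fun (fun t _ => by simp [mul_comm])
    measurableSet_Ioi

theorem integral_id (hμ : IsStdGumbel μ) : ∫ x, x ∂μ = eulerMascheroniConstant := by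
  rw [hμ.eq_map_neg_log, integral_map (by fun_prop) (by fun_prop), integral_stdExponential]
  simp only [mul_comm (exp _), neg_mul, integral_neg]
  rw [integral_log_mul_exp_neg_Ioi, neg_neg]

theorem map_iSup_add_sub_log {ι : Type*} [Fintype ι] [Nonempty ι] (hμ : IsStdGumbel μ) (a : ι → ℝ) :
    IsStdGumbel ((Measure.pi fun _ : ι => μ).map
      fun x => (⨆ i, a i + x i) - log (∑ i, exp (a i))) := by
  have := hμ.isProbabilityMeasure
  intro t
  rw [Measure.map_apply ((measurable_iSup_add a).sub_const _) measurableSet_Iic]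
  have : (fun x : ι → ℝ => (⨆ i, a i + x i) - log (∑ i, exp (a i))) ⁻¹' Iic t =
      {x | (⨆ i, a i + x i) ≤ t + log (∑ i, exp (a i))} := by
    ext x
    simp only [mem_preimage, mem_Iic, mem_ofPred_eq, sub_le_iff_le_add]
  rw [this, setOf_iSup_add_le_eq_pi, Measure.pi_pi]
  simp only [hμ _]
  rw [← ENNReal.ofReal_prod_of_nonneg (fun i _ => (exp_pos _).le), ← exp_sum, Finset.sum_neg_distrib,
    sum_exp_neg_sub_log_sum_exp]

end IsStdGumbel

theorem gumbel_logsumexp_general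
    (μ : Measure ℝ)
    (hcdf : ∀ t : ℝ, μ (Set.Iic t) = ENNReal.ofReal (Real.exp (-Real.exp (-t))))
    (n : ℕ) (hn : 1 ≤ n) (a : Fin n → ℝ) :
    ∫ x : Fin n → ℝ, (⨆ i : Fin n, (a i + x i)) ∂(Measure.pi fun _ : Fin n => μ)
      = Real.eulerMascheroniConstant + Real.log (∑ i : Fin n, Real.exp (a i)) := by
  have : Nonempty (Fin n) := Fin.pos_iff_nonempty.mp hn
  have hμ : IsStdGumbel μ := hcdf
  have := hμ.isProbabilityMeasure
  set c := log (∑ i, exp (a i))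
  have hY : Measurable fun x : Fin n → ℝ => (⨆ i, a i + x i) - c :=
    (measurable_iSup_add a).sub_const _
  have hlaw := hμ.map_iSup_add_sub_log a
  have hint : Integrable (fun x => (⨆ i, a i + x i) - c) (Measure.pi fun _ => μ) :=
    (integrable_map_measure aestronglyMeasurable_id hY.aemeasurable).1 hlaw.integrable_id
  have hval : ∫ x, (⨆ i, a i + x i) - c ∂(Measure.pi fun _ => μ) = eulerMascheroniConstant := by
    rw [← hlaw.integral_id]
    exact (integral_map hY.aemeasurable aestronglyMeasurable_id).symm
  calc ∫ x, (⨆ i, a i + x i) ∂(Measure.pi fun _ => μ)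
      = ∫ x, ((⨆ i, a i + x i) - c) + c ∂(Measure.pi fun _ => μ) := by simp_rw [sub_add_cancel]
    _ = eulerMascheroniConstant + c := by
      rw [integral_add hint (integrable_const c), hval, integral_const, probReal_univ, one_smul]

theorem gumbel_logsumexp
    (μ : Measure ℝ) [IsProbabilityMeasure μ]
    (hcdf : ∀ t : ℝ, μ (Set.Iic t) = ENNReal.ofReal (Real.exp (-Real.exp (-t))))
    (n : ℕ) (hn : 1 ≤ n) (a : Fin n → ℝ) :
    ∫ x : Fin n → ℝ, (⨆ i : Fin n, (a i + x i)) ∂(Measure.pi fun _ : Fin n => μ)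
      = Real.eulerMascheroniConstant + Real.log (∑ i : Fin n, Real.exp (a i)) :=
  gumbel_logsumexp_general μ hcdf n hn a
end
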